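/- arXiv:1904.04549 — 3 statements merged into one kernel-verified Lean document; each statement's English description precedes it below -/
import Mathlib

section
/- Let m ≥ 1, 1 ≤ r ≤ s < ∞, and p_k ≤ q_k (1 ≤ k ≤ m) with 1/s − ∑_{k=1}^m 1/q_k = 1/r − ∑_{k=1}^m 1/p_k. Then every m-linear operator T : E_1 × ⋯ × E_m → F that is absolutely (r; p_1,…,p_m)-summing is absolutely (s; q_1,…,q_m)-summing, and the corresponding summing norm does not increase. -/
/-!
Given `x`, put `α i = ‖T (x · i)‖`, `A = ∑ i, α i ^ s` and `a k = 1/p_k - 1/q_k ≥ 0`, so that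
`∑ k, a k = 1/r - 1/s`. Multiplying `x k i` by `(α i ^ s) ^ a k` turns `∑ i, ‖T (x · i)‖ ^ r`
into `A`, while Hölder's inequality for `1/p_k = a_k + 1/q_k` bounds the weak `ℓ_{p_k}` norm of
the rescaled family by `A ^ a k` times the weak `ℓ_{q_k}` norm of `x k`. The `(r; p)` inequality
for the rescaled families thus reads `A^{1/r} ≤ A^{1/r - 1/s} · C ∏ k, ‖x k‖_{w,q_k}`, and
cancelling `A^{1/r - 1/s}` gives the `(s; q)` inequality.
-/

open Finset

namespace Real

theorem Lp_le_L1_rpow_mul_Lq_of_nonneg {ι : Type*} [Fintype ι] {p q : ℝ} (hp : 0 < p)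
    (hpq : p ≤ q) {w b : ι → ℝ} (hw : ∀ i, 0 ≤ w i) (hb : ∀ i, 0 ≤ b i) :
    (∑ i, (w i ^ (1 / p - 1 / q) * b i) ^ p) ^ (1 / p) ≤
      (∑ i, w i) ^ (1 / p - 1 / q) * (∑ i, b i ^ q) ^ (1 / q) := by
  rcases hpq.eq_or_lt with rfl | hpq
  · simp
  have ha : 0 < 1 / p - 1 / q := sub_pos.2 (one_div_lt_one_div_of_lt hp hpq)
  have hT : HolderTriple (1 / p - 1 / q)⁻¹ q p :=
    ⟨by rw [inv_inv]; simp, inv_pos.2 ha, hp.trans hpq⟩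
  have hw' : ∀ i, 0 ≤ w i ^ (1 / p - 1 / q) := fun i => rpow_nonneg (hw i) _
  have h := Lr_rpow_le_Lp_mul_Lq_of_nonneg univ hT (fun i _ => hw' i) (fun i _ => hb i)
  simp only [← rpow_mul (hw _), mul_inv_cancel₀ ha.ne', rpow_one, div_inv_eq_mul] at h
  have hW : 0 ≤ ∑ i, w i := sum_nonneg fun i _ => hw i
  have hB : 0 ≤ ∑ i, b i ^ q := sum_nonneg fun i _ => rpow_nonneg (hb i) _
  calc (∑ i, (w i ^ (1 / p - 1 / q) * b i) ^ p) ^ (1 / p)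
      ≤ ((∑ i, w i) ^ (p * (1 / p - 1 / q)) * (∑ i, b i ^ q) ^ (p / q)) ^ (1 / p) := by
        gcongr
        exact sum_nonneg fun i _ => rpow_nonneg (mul_nonneg (hw' i) (hb i)) _
    _ = (∑ i, w i) ^ (1 / p - 1 / q) * (∑ i, b i ^ q) ^ (1 / q) := by
        rw [mul_rpow (rpow_nonneg hW _) (rpow_nonneg hB _), ← rpow_mul hW, ← rpow_mul hB]
        congr 2 <;> field_simp

theorem rpow_le_of_rpow_add_le_rpow_mul {A K u v : ℝ} (hA : 0 ≤ A) (hK : 0 ≤ K) (hv : 0 < v)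
    (h : A ^ (u + v) ≤ A ^ u * K) : A ^ v ≤ K := by
  rcases hA.eq_or_lt with rfl | hA
  · rwa [zero_rpow hv.ne']
  · rw [rpow_add hA] at h
    exact le_of_mul_le_mul_left h (rpow_pos_of_pos hA u)

end Real

section WeakLpNorm

variable {E ι : Type*} [NormedAddCommGroup E] [NormedSpace ℝ E] [Fintype ι]

noncomputable def weakLpNorm (p : ℝ) (x : ι → E) : ℝ :=
  ⨆ f : {f : E →L[ℝ] ℝ // ‖f‖ ≤ 1}, (∑ i, ‖f.1 (x i)‖ ^ p) ^ (1 / p)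

theorem weakLpNorm_nonneg (p : ℝ) (x : ι → E) : 0 ≤ weakLpNorm p x :=
  Real.iSup_nonneg fun _ =>
    Real.rpow_nonneg (sum_nonneg fun _ _ => Real.rpow_nonneg (norm_nonneg _) _) _

theorem le_weakLpNorm {p : ℝ} (hp : 0 ≤ p) (x : ι → E) (f : E →L[ℝ] ℝ) (hf : ‖f‖ ≤ 1) :
    (∑ i, ‖f (x i)‖ ^ p) ^ (1 / p) ≤ weakLpNorm p x := by
  refine le_ciSup (f := fun f : {f : E →L[ℝ] ℝ // ‖f‖ ≤ 1} => (∑ i, ‖f.1 (x i)‖ ^ p) ^ (1 / p))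
    ⟨(∑ i, ‖x i‖ ^ p) ^ (1 / p), ?_⟩ ⟨f, hf⟩
  rintro _ ⟨g, rfl⟩
  dsimp only
  gcongr with i
  exact (g.1.le_of_opNorm_le g.2 (x i)).trans_eq (one_mul _)

theorem weakLpNorm_rpow_smul_le {p q : ℝ} (hp : 0 < p) (hpq : p ≤ q) {w : ι → ℝ}
    (hw : ∀ i, 0 ≤ w i) (x : ι → E) :
    weakLpNorm p (fun i => w i ^ (1 / p - 1 / q) • x i) ≤
      (∑ i, w i) ^ (1 / p - 1 / q) * weakLpNorm q x := by
  have : Nonempty {f : E →L[ℝ] ℝ // ‖f‖ ≤ 1} := ⟨⟨0, by simp⟩⟩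
  refine ciSup_le fun f => ?_
  have hfx : ∀ i, ‖f.1 (w i ^ (1 / p - 1 / q) • x i)‖ = w i ^ (1 / p - 1 / q) * ‖f.1 (x i)‖ :=
    fun i => by
      rw [map_smul, norm_smul, Real.norm_of_nonneg (Real.rpow_nonneg (hw i) _)]
  simp only [hfx]
  calc _ ≤ (∑ i, w i) ^ (1 / p - 1 / q) * (∑ i, ‖f.1 (x i)‖ ^ q) ^ (1 / q) :=
        Real.Lp_le_L1_rpow_mul_Lq_of_nonneg hp hpq hw fun i => norm_nonneg _
    _ ≤ (∑ i, w i) ^ (1 / p - 1 / q) * weakLpNorm q x := by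
        gcongr
        · exact Real.rpow_nonneg (sum_nonneg fun i _ => hw i) _
        · exact le_weakLpNorm (hp.le.trans hpq) x f.1 f.2

end WeakLpNorm

theorem ContinuousMultilinearMap.norm_map_rpow_smul_rpow {κ : Type*} [Fintype κ]
    {E : κ → Type*} [∀ k, NormedAddCommGroup (E k)] [∀ k, NormedSpace ℝ (E k)]
    {F : Type*} [NormedAddCommGroup F] [NormedSpace ℝ F] (T : ContinuousMultilinearMap ℝ E F)
    {r s : ℝ} (hr : r ≠ 0) (hs : s ≠ 0) {a : κ → ℝ} (ha : ∀ k, 0 ≤ a k)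
    (hsum : ∑ k, a k = 1 / r - 1 / s) (v : ∀ k, E k) :
    ‖T (fun k => (‖T v‖ ^ s) ^ a k • v k)‖ ^ r = ‖T v‖ ^ s := by
  have ht : 0 ≤ ‖T v‖ := norm_nonneg _
  have hts : 0 ≤ ‖T v‖ ^ s := Real.rpow_nonneg ht s
  have hexp : s * (1 / r - 1 / s) * r + r = s := by field_simp; ring
  rw [T.map_smul_univ, norm_smul, ← Real.rpow_sum_of_nonneg hts fun k _ => ha k, hsum,
    Real.norm_of_nonneg (Real.rpow_nonneg hts _), Real.mul_rpow (Real.rpow_nonneg hts _) ht,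
    ← Real.rpow_mul ht, ← Real.rpow_mul ht, ← Real.rpow_add' ht (by rw [hexp]; exact hs), hexp]

theorem stmt2_general (m : ℕ)
    {E : Fin m → Type*} [∀ k, NormedAddCommGroup (E k)] [∀ k, NormedSpace ℝ (E k)]
    {F : Type*} [NormedAddCommGroup F] [NormedSpace ℝ F]
    (r s : ℝ) (p q : Fin m → ℝ) (hr : 1 ≤ r) (hrs : r ≤ s)
    (hp : ∀ k, 1 ≤ p k) (hpq : ∀ k, p k ≤ q k)
    (heq : 1 / s - ∑ k, 1 / q k = 1 / r - ∑ k, 1 / p k)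
    (T : ContinuousMultilinearMap ℝ E F) (C : ℝ) (hC : 0 ≤ C)
    (hT : ∀ (n : ℕ) (x : ∀ k, Fin n → E k),
      (∑ i, ‖T (fun k => x k i)‖ ^ r) ^ (1 / r) ≤
        C * ∏ k, ⨆ f : {f : E k →L[ℝ] ℝ // ‖f‖ ≤ 1},
          (∑ i, ‖f.1 (x k i)‖ ^ p k) ^ (1 / p k)) :
    ∀ (n : ℕ) (x : ∀ k, Fin n → E k),
      (∑ i, ‖T (fun k => x k i)‖ ^ s) ^ (1 / s) ≤
        C * ∏ k, ⨆ f : {f : E k →L[ℝ] ℝ // ‖f‖ ≤ 1},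
          (∑ i, ‖f.1 (x k i)‖ ^ q k) ^ (1 / q k) := by
  intro n x
  have hs0 : 0 < s := by linarith
  have hp0 : ∀ k, 0 < p k := fun k => one_pos.trans_le (hp k)
  set a : Fin m → ℝ := fun k => 1 / p k - 1 / q k
  have ha : ∀ k, 0 ≤ a k := fun k => sub_nonneg.2 (one_div_le_one_div_of_le (hp0 k) (hpq k))
  have hsum : ∑ k, a k = 1 / r - 1 / s := by
    simp only [a, sum_sub_distrib]
    linarith
  set A := ∑ i, ‖T (fun k => x k i)‖ ^ s
  have hA : 0 ≤ A := sum_nonneg fun i _ => Real.rpow_nonneg (norm_nonneg _) s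
  have key : A ^ (1 / r - 1 / s + 1 / s) ≤
      A ^ (1 / r - 1 / s) * (C * ∏ k, weakLpNorm (q k) (x k)) := calc
    _ = (∑ i : Fin n, ‖T (fun k => (‖T (fun k => x k i)‖ ^ s) ^ a k • x k i)‖ ^ r) ^ (1 / r) := by
      simp only [sub_add_cancel, T.norm_map_rpow_smul_rpow (by linarith) hs0.ne' ha hsum, A]
    _ ≤ C * ∏ k, weakLpNorm (p k) (fun i => (‖T (fun k => x k i)‖ ^ s) ^ a k • x k i) := hT n _
    _ ≤ C * ∏ k, (A ^ a k * weakLpNorm (q k) (x k)) := by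
      gcongr with k
      · exact fun k _ => weakLpNorm_nonneg _ _
      · exact weakLpNorm_rpow_smul_le (hp0 k) (hpq k)
          (fun i => Real.rpow_nonneg (norm_nonneg _) s) _
    _ = A ^ (1 / r - 1 / s) * (C * ∏ k, weakLpNorm (q k) (x k)) := by
      rw [prod_mul_distrib, ← Real.rpow_sum_of_nonneg hA fun k _ => ha k, hsum]
      ring
  exact Real.rpow_le_of_rpow_add_le_rpow_mul hA
    (mul_nonneg hC (prod_nonneg fun k _ => weakLpNorm_nonneg _ _)) (by positivity) key

/-- **Matos' Inclusion Theorem for absolutely summing multilinear operators.**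
Let `m ≥ 1`, `1 ≤ r ≤ s < ∞`, `p k ≤ q k` with
`1/s - ∑ 1/q_k = 1/r - ∑ 1/p_k`.  Then every absolutely `(r;p)`-summing
`m`-linear operator is absolutely `(s;q)`-summing; any admissible constant `C`
for `(r;p)` remains admissible for `(s;q)`, so the summing norm does not
increase. -/
theorem stmt2 (m : ℕ) (hm : 1 ≤ m)
    {E : Fin m → Type*} [∀ k, NormedAddCommGroup (E k)] [∀ k, NormedSpace ℝ (E k)]
    [∀ k, CompleteSpace (E k)]
    {F : Type*} [NormedAddCommGroup F] [NormedSpace ℝ F] [CompleteSpace F]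
    (r s : ℝ) (p q : Fin m → ℝ) (hr : 1 ≤ r) (hrs : r ≤ s)
    (hp : ∀ k, 1 ≤ p k) (hpq : ∀ k, p k ≤ q k)
    (heq : 1 / s - ∑ k, 1 / q k = 1 / r - ∑ k, 1 / p k)
    (T : ContinuousMultilinearMap ℝ E F) (C : ℝ) (hC : 0 ≤ C)
    (hT : ∀ (n : ℕ) (x : ∀ k, Fin n → E k),
      (∑ i, ‖T (fun k => x k i)‖ ^ r) ^ (1 / r) ≤
        C * ∏ k, ⨆ f : {f : E k →L[ℝ] ℝ // ‖f‖ ≤ 1},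
          (∑ i, ‖f.1 (x k i)‖ ^ p k) ^ (1 / p k)) :
    ∀ (n : ℕ) (x : ∀ k, Fin n → E k),
      (∑ i, ‖T (fun k => x k i)‖ ^ s) ^ (1 / s) ≤
        C * ∏ k, ⨆ f : {f : E k →L[ℝ] ℝ // ‖f‖ ≤ 1},
          (∑ i, ‖f.1 (x k i)‖ ^ q k) ^ (1 / q k) :=
  stmt2_general m r s p q hr hrs hp hpq heq T C hC hT
end

section
/- Let m, d be positive integers with 1 ≤ d ≤ m, let I = {I_1,…,I_d} be a partition of {1,…,m} into nonempty sets, and let (p_1,…,p_m, q_1,…,q_d) ∈ [1,∞)^{m+d}. If there exists k ∈ {1,…,d} with 1/q_k > ∑_{j ∈ I_k} 1/p_j, then the only I-block (q_1,…,q_d; p_1,…,p_m)-summing m-linear operator from E_1 × ⋯ × E_m to F is the zero operator, for any infinite-dimensional Banach spaces E_1,…,E_m and any Banach space F ≠ {0}. -/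
open scoped ENNReal NNReal

/-- The weak `ℓ_p` norm (in `ℝ≥0∞`) of a sequence in a normed space `E`:
`sup_{‖f‖ ≤ 1} (∑_j ‖f (x_j)‖^p)^{1/p}`. -/
noncomputable def weakNorm {E : Type*} [NormedAddCommGroup E] [NormedSpace ℝ E]
    (p : ℝ) (x : ℕ → E) : ℝ≥0∞ :=
  ⨆ f : {f : E →L[ℝ] ℝ // ‖f‖ ≤ 1},
    (∑' j : ℕ, (‖f.1 (x j)‖₊ : ℝ≥0∞) ^ p) ^ (1 / p)

/-- Iterated mixed `ℓ_{s_1}(ℓ_{s_2}(⋯ℓ_{s_d}))` norm (in `ℝ≥0∞`) of a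
`d`-indexed family: `(∑_{i_1} (⋯ (∑_{i_d} g^{s_d})^{s_{d-1}/s_d} ⋯)^{s_1/s_2})^{1/s_1}`. -/
noncomputable def emixed : (d : ℕ) → (Fin d → ℝ) → ((Fin d → ℕ) → ℝ≥0∞) → ℝ≥0∞
  | 0, _, g => g finZeroElim
  | d + 1, s, g =>
      (∑' i : ℕ, (emixed d (Fin.tail s) (fun j => g (Fin.cons i j))) ^ s 0) ^ (1 / s 0)

/-!
If `1/q_k > ∑_{j ∈ I_k} 1/p_j`, pick `θ_j > 1/p_j` with `∑_{j ∈ I_k} θ_j < 1/q_k`. For `T a ≠ 0` the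
sequences `x_j(n) = (n+1)^{-θ_j} a_j` are weakly `p_j`-summable, since `θ_j p_j > 1`. Restricting the
mixed norm to the `k`-th axis of block indices bounds it below by the `ℓ_{q_k}` norm of
`(n+1)^{-∑_{I_k} θ_j} ‖T a‖`, which is infinite.
-/

section emixed

variable {d : ℕ} {s : Fin d → ℝ}

lemma le_emixed (hs : ∀ n, 0 < s n) (g : (Fin d → ℕ) → ℝ≥0∞) (i : Fin d → ℕ) :
    g i ≤ emixed d s g := by
  induction d with
  | zero => rw [emixed, Subsingleton.elim i finZeroElim]
  | succ d ih =>
    calc g i = g (Fin.cons (i 0) (Fin.tail i)) := by rw [Fin.cons_self_tail]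
      _ ≤ emixed d (Fin.tail s) (fun j => g (Fin.cons (i 0) j)) :=
          ih (fun n => hs n.succ) _ _
      _ = ((emixed d (Fin.tail s) (fun j => g (Fin.cons (i 0) j))) ^ s 0) ^ (1 / s 0) := by
          rw [one_div, ENNReal.rpow_rpow_inv (hs 0).ne']
      _ ≤ emixed (d + 1) s g := by
          rw [emixed]
          exact ENNReal.rpow_le_rpow (ENNReal.le_tsum (i 0)) (one_div_pos.2 (hs 0)).le

lemma tsum_single_rpow_le_emixed (hs : ∀ n, 0 < s n) (g : (Fin d → ℕ) → ℝ≥0∞) (k : Fin d) :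
    (∑' n, g (Pi.single k n) ^ s k) ^ (1 / s k) ≤ emixed d s g := by
  induction d with
  | zero => exact k.elim0
  | succ d ih =>
    cases k using Fin.cases with
    | zero =>
      have hcons : ∀ n : ℕ, (Pi.single 0 n : Fin (d + 1) → ℕ) = Fin.cons n 0 := fun n => by
        funext j; cases j using Fin.cases <;> simp
      rw [emixed]
      refine ENNReal.rpow_le_rpow (ENNReal.tsum_le_tsum fun n => ?_) (one_div_pos.2 (hs 0)).le
      rw [hcons]
      exact ENNReal.rpow_le_rpow (le_emixed (fun n => hs n.succ) _ 0) (hs 0).le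
    | succ k =>
      have hcons : ∀ n : ℕ, (Pi.single k.succ n : Fin (d + 1) → ℕ) = Fin.cons 0 (Pi.single k n) :=
        fun n => by funext j; cases j using Fin.cases <;> simp [Pi.single_apply]
      calc (∑' n, g (Pi.single k.succ n) ^ s k.succ) ^ (1 / s k.succ)
          ≤ emixed d (Fin.tail s) (fun j => g (Fin.cons 0 j)) := by
            simp_rw [hcons]; exact ih (fun n => hs n.succ) _ k
        _ = ((emixed d (Fin.tail s) (fun j => g (Fin.cons 0 j))) ^ s 0) ^ (1 / s 0) := by
            rw [one_div, ENNReal.rpow_rpow_inv (hs 0).ne']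
        _ ≤ emixed (d + 1) s g := by
            rw [emixed]
            exact ENNReal.rpow_le_rpow (ENNReal.le_tsum 0) (one_div_pos.2 (hs 0)).le

end emixed

lemma weakNorm_smul_le {E : Type*} [NormedAddCommGroup E] [NormedSpace ℝ E] {p : ℝ} (hp : 0 < p)
    (c : ℕ → ℝ) (a : E) :
    weakNorm p (fun n => c n • a) ≤ (∑' n, ‖c n‖ₑ ^ p) ^ (1 / p) * ‖a‖ₑ := by
  refine iSup_le fun f => ?_
  calc (∑' n, (‖f.1 (c n • a)‖₊ : ℝ≥0∞) ^ p) ^ (1 / p)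
      = (∑' n, ‖c n‖ₑ ^ p * ‖f.1 a‖ₑ ^ p) ^ (1 / p) := by
        simp_rw [map_smul, ← enorm_eq_nnnorm, enorm_smul, ENNReal.mul_rpow_of_nonneg _ _ hp.le]
    _ = (∑' n, ‖c n‖ₑ ^ p) ^ (1 / p) * ‖f.1 a‖ₑ := by
        rw [ENNReal.tsum_mul_right, ENNReal.mul_rpow_of_nonneg _ _ (one_div_pos.2 hp).le, one_div,
          ENNReal.rpow_rpow_inv hp.ne']
    _ ≤ (∑' n, ‖c n‖ₑ ^ p) ^ (1 / p) * ‖a‖ₑ := by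
        gcongr
        exact enorm_le_iff_norm_le.2 (by simpa using f.1.le_of_opNorm_le f.2 a)

lemma tsum_enorm_rpow_neg_rpow_ne_top_iff {θ p : ℝ} (hp : 0 < p) :
    ∑' n : ℕ, ‖((n : ℝ) + 1) ^ (-θ)‖ₑ ^ p ≠ ∞ ↔ 1 < θ * p := by
  have hterm : ∀ n : ℕ, ‖((n : ℝ) + 1) ^ (-θ)‖ₑ ^ p
      = ((‖((n : ℝ) + 1) ^ (-θ)‖₊ ^ p : ℝ≥0) : ℝ≥0∞) := fun n => by
    rw [enorm_eq_nnnorm, ENNReal.coe_rpow_of_nonneg _ hp.le]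
  rw [tsum_congr hterm, ENNReal.tsum_coe_ne_top_iff_summable, ← NNReal.summable_coe,
    ← Real.summable_one_div_nat_add_rpow 1]
  refine summable_congr fun n => ?_
  have hn : (0 : ℝ) < n + 1 := by positivity
  rw [NNReal.coe_rpow, coe_nnnorm, Real.norm_of_nonneg (by positivity), abs_of_pos hn,
    ← Real.rpow_mul hn.le, neg_mul, Real.rpow_neg hn.le, one_div]

lemma Finset.exists_forall_lt_and_sum_lt {ι : Type*} (s : Finset ι) (f : ι → ℝ) {t : ℝ}
    (h : ∑ j ∈ s, f j < t) : ∃ θ : ι → ℝ, (∀ j, f j < θ j) ∧ ∑ j ∈ s, θ j < t := by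
  set ε := (t - ∑ j ∈ s, f j) / (s.card + 1)
  have hε : 0 < ε := div_pos (by linarith) (by positivity)
  refine ⟨fun j => f j + ε, fun j => by linarith, ?_⟩
  have : (s.card : ℝ) * ε < t - ∑ j ∈ s, f j := by
    calc (s.card : ℝ) * ε < (s.card + 1) * ε := by linarith
      _ = t - ∑ j ∈ s, f j := by simp only [ε]; field_simp
  rw [Finset.sum_add_distrib, Finset.sum_const, nsmul_eq_mul]
  linarith

lemma prod_natCast_single_add_one_rpow_neg {ι κ : Type*} [Fintype ι] [DecidableEq κ]
    (b : ι → κ) (k : κ) (θ : ι → ℝ) (n : ℕ) :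
    ∏ j, (((Pi.single k n : κ → ℕ) (b j) : ℝ) + 1) ^ (-θ j)
      = ((n : ℝ) + 1) ^ (-∑ j ∈ Finset.univ.filter (fun j => b j = k), θ j) := by
  rw [← Finset.sum_neg_distrib, Real.rpow_sum_of_pos (by positivity), Finset.prod_filter]
  refine Finset.prod_congr rfl fun j _ => ?_
  by_cases hj : b j = k <;> simp [hj]

-- The partition `I` is encoded by `b`, with `I_k = b⁻¹{k}`.
theorem stmt3_general (m d : ℕ) (b : Fin m → Fin d)
    (p : Fin m → ℝ) (q : Fin d → ℝ) (hp : ∀ j, 1 ≤ p j) (hq : ∀ k, 1 ≤ q k)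
    {E : Fin m → Type*} [∀ j, NormedAddCommGroup (E j)] [∀ j, NormedSpace ℝ (E j)]
    {F : Type*} [NormedAddCommGroup F] [NormedSpace ℝ F]
    (k : Fin d)
    (hk : 1 / q k > ∑ j ∈ Finset.univ.filter (fun j => b j = k), 1 / p j)
    (T : ContinuousMultilinearMap ℝ E F)
    (hT : ∃ C : ℝ≥0, 0 < C ∧ ∀ x : ∀ j, ℕ → E j,
      emixed d q (fun i => (‖T (fun j => x j (i (b j)))‖₊ : ℝ≥0∞)) ≤
        (C : ℝ≥0∞) * ∏ j, weakNorm (p j) (x j)) :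
    T = 0 := by
  obtain ⟨C, -, hC⟩ := hT
  have hp₀ : ∀ j, 0 < p j := fun j => one_pos.trans_le (hp j)
  have hq₀ : ∀ k, 0 < q k := fun k => one_pos.trans_le (hq k)
  obtain ⟨θ, hθp, hθq⟩ := Finset.exists_forall_lt_and_sum_lt _ (fun j => 1 / p j) hk
  ext a
  by_contra ha
  set x : ∀ j, ℕ → E j := fun j n => ((n : ℝ) + 1) ^ (-θ j) • a j
  have hrhs : (C : ℝ≥0∞) * ∏ j, weakNorm (p j) (x j) ≠ ∞ := by
    refine ENNReal.mul_ne_top ENNReal.coe_ne_top (ENNReal.prod_ne_top fun j _ => ?_)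
    have hsum := (tsum_enorm_rpow_neg_rpow_ne_top_iff (θ := θ j) (hp₀ j)).2 <| by
      have := hθp j; rw [div_lt_iff₀ (hp₀ j)] at this; linarith
    refine ne_top_of_le_ne_top ?_ (weakNorm_smul_le (hp₀ j) _ (a j))
    exact ENNReal.mul_ne_top (ENNReal.rpow_ne_top_of_nonneg (one_div_pos.2 (hp₀ j)).le hsum)
      enorm_ne_top
  have hlhs : emixed d q (fun i => (‖T (fun j => x j (i (b j)))‖₊ : ℝ≥0∞)) = ∞ := by
    have hdiv : ∑' n : ℕ,
        ‖((n : ℝ) + 1) ^ (-∑ j ∈ Finset.univ.filter (fun j => b j = k), θ j)‖ₑ ^ q k = ∞ := by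
      rw [← not_ne_iff, tsum_enorm_rpow_neg_rpow_ne_top_iff (hq₀ k), not_lt]
      rw [lt_div_iff₀ (hq₀ k)] at hθq; linarith
    have hTa : ‖T a‖ₑ ^ q k ≠ 0 := (ENNReal.rpow_pos (enorm_pos.2 ha) enorm_ne_top).ne'
    refine top_le_iff.1 (le_trans (le_of_eq ?_) (tsum_single_rpow_le_emixed hq₀ _ k))
    simp only [← enorm_eq_nnnorm, x, T.map_smul_univ, prod_natCast_single_add_one_rpow_neg,
      enorm_smul, ENNReal.mul_rpow_of_nonneg _ _ (hq₀ k).le, ENNReal.tsum_mul_right]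
    rw [hdiv, ENNReal.top_mul hTa, ENNReal.top_rpow_of_pos (one_div_pos.2 (hq₀ k))]
  exact hrhs (top_le_iff.1 (hlhs ▸ hC x))

/-- **Triviality of the block summing class.**
Let `I = {I_1,…,I_d}` be a partition of `{1,…,m}` into nonempty sets (encoded by a
surjection `b : Fin m → Fin d`, where `I_k = b⁻¹{k}`), with exponents
`p_j, q_k ∈ [1,∞)`.  If `1/q_k > ∑_{j ∈ I_k} 1/p_j` for some `k`, then the only
`I`-block `(q;p)`-summing `m`-linear operator `T : E_1 × ⋯ × E_m → F` is `0`,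
for any infinite-dimensional Banach spaces `E_j` and nonzero Banach space `F`. -/
theorem stmt3 (m d : ℕ) (hd : 1 ≤ d) (hdm : d ≤ m)
    (b : Fin m → Fin d) (hb : Function.Surjective b)
    (p : Fin m → ℝ) (q : Fin d → ℝ) (hp : ∀ j, 1 ≤ p j) (hq : ∀ k, 1 ≤ q k)
    {E : Fin m → Type*} [∀ j, NormedAddCommGroup (E j)] [∀ j, NormedSpace ℝ (E j)]
    [∀ j, CompleteSpace (E j)] (hE : ∀ j, ¬ FiniteDimensional ℝ (E j))
    {F : Type*} [NormedAddCommGroup F] [NormedSpace ℝ F] [CompleteSpace F] [Nontrivial F]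
    (k : Fin d)
    (hk : 1 / q k > ∑ j ∈ Finset.univ.filter (fun j => b j = k), 1 / p j)
    (T : ContinuousMultilinearMap ℝ E F)
    (hT : ∃ C : ℝ≥0, 0 < C ∧ ∀ x : ∀ j, ℕ → E j,
      emixed d q (fun i => (‖T (fun j => x j (i (b j)))‖₊ : ℝ≥0∞)) ≤
        (C : ℝ≥0∞) * ∏ j, weakNorm (p j) (x j)) :
    T = 0 :=
  stmt3_general m d b p q hp hq k hk T hT
end

section
/- Consider 3-linear forms on ℓ_4^n (p = 4, m = 3). There exists D ≥ 1 such that for all n and all trilinear forms A : ℓ_4^n × ℓ_4^n × ℓ_4^n → 𝕂, (∑_{i=1}^n (∑_{j=1}^n |A(e_i, e_i, e_j)|^{12/5})^{5/3})^{1/4} ≤ D ‖A‖, i.e., the mixed exponents (s_1, s_2) = (4, 12/5) hold for the block partition I_1 = {1,2}, I_2 = {3} with p = 4, m = 3. -/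
set_option maxHeartbeats 1000000

open Finset
open scoped ENNReal

instance : Fact ((1 : ℝ≥0∞) ≤ 4) := ⟨by norm_num⟩

/-- The `i`-th canonical unit vector of `ℓ_4^n` over `𝕂`. -/
noncomputable def e4 {𝕂 : Type*} [RCLike 𝕂] (n : ℕ) (i : Fin n) :
    PiLp 4 (fun _ : Fin n => 𝕂) :=
  (WithLp.equiv 4 (Fin n → 𝕂)).symm (Pi.single i 1)

section Aux

variable {R : Type*} [CommRing R]

def sgR (R : Type*) [Ring R] (b : Bool) : R := if b then 1 else -1

lemma sgR_mul_self {R : Type*} [Ring R] (b : Bool) : sgR R b * sgR R b = 1 := by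
  cases b <;> simp [sgR]

lemma sum_pi_bool_succ {M : Type*} [AddCommMonoid M] {m : ℕ} (F : (Fin (m+1) → Bool) → M) :
    ∑ s : Fin (m+1) → Bool, F s = ∑ b : Bool, ∑ t : Fin m → Bool, F (Fin.cons b t) := by
  have h : ∑ p : Bool × (Fin m → Bool), F (Fin.cons p.1 p.2) = ∑ s : Fin (m+1) → Bool, F s :=
    Fintype.sum_equiv (Fin.consEquiv fun _ => Bool) _ _ (fun _ => rfl)
  rw [← h, Fintype.sum_prod_type]

lemma I2M' : ∀ {m : ℕ} (c : Fin m → Fin m → R),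
    ∑ s : Fin m → Bool, ∑ i, ∑ k, sgR R (s i) * sgR R (s k) * c i k
      = 2 ^ m * ∑ i, c i i := by
  intro m
  induction m with
  | zero => intro c; simp
  | succ m ih =>
    intro c
    rw [sum_pi_bool_succ]
    have key : ∀ (b : Bool) (t : Fin m → Bool),
        (∑ i, ∑ k, sgR R ((Fin.cons b t : Fin (m+1) → Bool) i)
            * sgR R ((Fin.cons b t : Fin (m+1) → Bool) k) * c i k)
        = c 0 0
          + sgR R b * ((∑ k : Fin m, sgR R (t k) * c 0 k.succ)
              + (∑ i : Fin m, sgR R (t i) * c i.succ 0))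
          + ∑ i : Fin m, ∑ k : Fin m, sgR R (t i) * sgR R (t k) * c i.succ k.succ := by
      intro b t
      have e1 : (∑ k, sgR R ((Fin.cons b t : Fin (m+1) → Bool) 0)
            * sgR R ((Fin.cons b t : Fin (m+1) → Bool) k) * c 0 k)
          = c 0 0 + sgR R b * ∑ k : Fin m, sgR R (t k) * c 0 k.succ := by
        rw [Fin.sum_univ_succ]
        simp only [Fin.cons_zero, Fin.cons_succ, sgR_mul_self, one_mul]
        rw [Finset.mul_sum]
        refine congrArg (c 0 0 + ·) (Finset.sum_congr rfl fun k _ => by ring)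
      have e2 : ∀ i : Fin m, (∑ k, sgR R ((Fin.cons b t : Fin (m+1) → Bool) i.succ)
            * sgR R ((Fin.cons b t : Fin (m+1) → Bool) k) * c i.succ k)
          = sgR R b * (sgR R (t i) * c i.succ 0)
            + ∑ k : Fin m, sgR R (t i) * sgR R (t k) * c i.succ k.succ := by
        intro i
        rw [Fin.sum_univ_succ]
        simp only [Fin.cons_zero, Fin.cons_succ]
        refine congrArg (· + _) (by ring)
      rw [Fin.sum_univ_succ, e1, Finset.sum_congr rfl (fun i _ => e2 i),
        Finset.sum_add_distrib, ← Finset.mul_sum]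
      ring
    simp only [key]
    have hconst : ∀ x : R, ∑ _t : Fin m → Bool, x = 2^m * x := by
      intro x
      rw [Finset.sum_const]
      simp [Finset.card_univ, nsmul_eq_mul]
    have hb : ∀ b : Bool, ∑ t : Fin m → Bool,
        (c 0 0
          + sgR R b * ((∑ k : Fin m, sgR R (t k) * c 0 k.succ)
              + (∑ i : Fin m, sgR R (t i) * c i.succ 0))
          + ∑ i : Fin m, ∑ k : Fin m, sgR R (t i) * sgR R (t k) * c i.succ k.succ)
        = 2^m * c 0 0
          + sgR R b * (∑ t : Fin m → Bool, ((∑ k : Fin m, sgR R (t k) * c 0 k.succ)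
              + (∑ i : Fin m, sgR R (t i) * c i.succ 0)))
          + 2^m * ∑ i : Fin m, c i.succ i.succ := by
      intro b
      rw [Finset.sum_add_distrib, Finset.sum_add_distrib, hconst, ← Finset.mul_sum,
        ih (fun i k => c i.succ k.succ)]
    rw [Fintype.sum_bool, hb true, hb false, Fin.sum_univ_succ]
    have : sgR R true = 1 ∧ sgR R false = -1 := ⟨rfl, rfl⟩
    rw [this.1, this.2]
    ring

lemma hconst {m : ℕ} (x : R) : ∑ _t : Fin m → Bool, x = 2^m * x := by
  rw [Finset.sum_const]; simp [Finset.card_univ, nsmul_eq_mul]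

lemma I2' {m : ℕ} (x y : Fin m → R) :
    ∑ s : Fin m → Bool, (∑ i, sgR R (s i) * x i) * (∑ k, sgR R (s k) * y k)
      = 2^m * ∑ i, x i * y i := by
  have h := I2M' (R := R) (fun i k => x i * y k) (m := m)
  rw [← h]
  refine Finset.sum_congr rfl fun s _ => ?_
  rw [Finset.sum_mul_sum]
  exact Finset.sum_congr rfl fun i _ => Finset.sum_congr rfl fun k _ => by ring

lemma I4' : ∀ {m : ℕ} (x y : Fin m → ℝ),
    ∑ s : Fin m → Bool, (∑ i, sgR ℝ (s i) * x i)^2 * (∑ k, sgR ℝ (s k) * y k)^2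
      = 2^m * ((∑ i, x i^2) * (∑ i, y i^2) + 2*(∑ i, x i * y i)^2 - 2 * ∑ i, x i^2 * y i^2) := by
  intro m
  induction m with
  | zero => intro x y; simp
  | succ m ih =>
    intro x y
    rw [sum_pi_bool_succ]
    have hP : ∀ (b : Bool) (t : Fin m → Bool) (z : Fin (m+1) → ℝ),
        (∑ i, sgR ℝ ((Fin.cons b t : Fin (m+1) → Bool) i) * z i)
          = sgR ℝ b * z 0 + ∑ i : Fin m, sgR ℝ (t i) * z i.succ := by
      intro b t z
      rw [Fin.sum_univ_succ]
      simp only [Fin.cons_zero, Fin.cons_succ]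
    simp only [hP]
    have hb : ∀ t : Fin m → Bool,
        ∑ b : Bool, (sgR ℝ b * x 0 + ∑ i : Fin m, sgR ℝ (t i) * x i.succ)^2
            * (sgR ℝ b * y 0 + ∑ i : Fin m, sgR ℝ (t i) * y i.succ)^2
        = 2 * ((x 0^2 + (∑ i : Fin m, sgR ℝ (t i) * x i.succ)^2)
              * (y 0^2 + (∑ i : Fin m, sgR ℝ (t i) * y i.succ)^2))
          + 8 * (x 0 * y 0) * ((∑ i : Fin m, sgR ℝ (t i) * x i.succ)
              * (∑ i : Fin m, sgR ℝ (t i) * y i.succ)) := by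
      intro t
      rw [Fintype.sum_bool]
      have h1 : sgR ℝ true = 1 := rfl
      have h2 : sgR ℝ false = -1 := rfl
      rw [h1, h2]
      ring
    rw [Finset.sum_comm]
    rw [Finset.sum_congr rfl fun t _ => hb t]
    rw [Finset.sum_add_distrib, ← Finset.mul_sum, ← Finset.mul_sum, I2']
    have expand : ∑ t : Fin m → Bool,
        (x 0^2 + (∑ i : Fin m, sgR ℝ (t i) * x i.succ)^2)
          * (y 0^2 + (∑ i : Fin m, sgR ℝ (t i) * y i.succ)^2)
        = 2^m * (x 0^2 * y 0^2)
          + x 0^2 * (2^m * ∑ i : Fin m, y i.succ * y i.succ)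
          + y 0^2 * (2^m * ∑ i : Fin m, x i.succ * x i.succ)
          + 2^m * ((∑ i : Fin m, x i.succ^2) * (∑ i : Fin m, y i.succ^2)
              + 2*(∑ i : Fin m, x i.succ * y i.succ)^2 - 2 * ∑ i : Fin m, x i.succ^2 * y i.succ^2) := by
      have : ∀ t : Fin m → Bool,
          (x 0^2 + (∑ i : Fin m, sgR ℝ (t i) * x i.succ)^2)
            * (y 0^2 + (∑ i : Fin m, sgR ℝ (t i) * y i.succ)^2)
          = x 0^2 * y 0^2
            + x 0^2 * ((∑ i : Fin m, sgR ℝ (t i) * y i.succ) * (∑ i : Fin m, sgR ℝ (t i) * y i.succ))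
            + y 0^2 * ((∑ i : Fin m, sgR ℝ (t i) * x i.succ) * (∑ i : Fin m, sgR ℝ (t i) * x i.succ))
            + (∑ i : Fin m, sgR ℝ (t i) * x i.succ)^2 * (∑ i : Fin m, sgR ℝ (t i) * y i.succ)^2 := by
        intro t; ring
      rw [Finset.sum_congr rfl fun t _ => this t, Finset.sum_add_distrib, Finset.sum_add_distrib,
        Finset.sum_add_distrib, hconst, ← Finset.mul_sum, ← Finset.mul_sum, I2', I2', ih]
    rw [expand]
    rw [Fin.sum_univ_succ (f := fun i => x i^2), Fin.sum_univ_succ (f := fun i => y i^2),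
      Fin.sum_univ_succ (f := fun i => x i * y i), Fin.sum_univ_succ (f := fun i => x i^2 * y i^2)]
    ring

variable {𝕂 : Type*} [RCLike 𝕂] {n : ℕ}

noncomputable def Xv (u : Fin n → 𝕂) : PiLp 4 (fun _ : Fin n => 𝕂) :=
  (WithLp.equiv 4 (Fin n → 𝕂)).symm u

lemma norm_e4 (i : Fin n) : ‖e4 (𝕂 := 𝕂) n i‖ = 1 := by
  rw [e4, WithLp.equiv_symm_apply, PiLp.norm_toLp_single]; simp

lemma norm_Xv' (u : Fin n → 𝕂) : ‖Xv u‖ = (∑ i, ‖u i‖ ^ (4:ℝ)) ^ ((1:ℝ)/4) := by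
  rw [Xv, PiLp.norm_eq_sum (p := 4) (by norm_num)]
  norm_num

lemma Xv_sum (u : Fin n → 𝕂) : Xv u = ∑ i, u i • e4 n i :=
  calc Xv u = (WithLp.linearEquiv 4 𝕂 (Fin n → 𝕂)).symm (∑ i, Pi.single i (u i)) := by
        rw [Finset.univ_sum_single]; rfl
  _ = ∑ i, (WithLp.linearEquiv 4 𝕂 (Fin n → 𝕂)).symm (Pi.single i (u i)) := map_sum _ _ _
  _ = ∑ i, u i • e4 n i := by
      refine Finset.sum_congr rfl fun i _ => ?_
      have h1 : Pi.single (M := fun _ : Fin n => 𝕂) i (u i)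
          = u i • (Pi.single (M := fun _ : Fin n => 𝕂) i 1) := by
        funext j; by_cases h : j = i <;> simp [Pi.single_apply, h]
      rw [h1, map_smul]
      rfl

def eqv3 (n : ℕ) : (Fin n × Fin n × Fin n) ≃ (Fin 3 → Fin n) where
  toFun p := ![p.1, p.2.1, p.2.2]
  invFun r := (r 0, r 1, r 2)
  left_inv p := by obtain ⟨a, b, c⟩ := p; rfl
  right_inv r := by funext k; fin_cases k <;> rfl

lemma sum_fin3 {M : Type*} [AddCommMonoid M] (F : Fin n → Fin n → Fin n → M) :
    ∑ r : Fin 3 → Fin n, F (r 0) (r 1) (r 2) = ∑ i, ∑ k, ∑ j, F i k j := by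
  have h : ∑ p : Fin n × Fin n × Fin n, F p.1 p.2.1 p.2.2
      = ∑ r : Fin 3 → Fin n, F (r 0) (r 1) (r 2) :=
    Fintype.sum_equiv (eqv3 n) _ _ (fun p => by simp [eqv3])
  rw [← h, Fintype.sum_prod_type' (f := fun a (y : Fin n × Fin n) => F a y.1 y.2)]
  exact Finset.sum_congr rfl fun i _ =>
    Fintype.sum_prod_type' (f := fun a b => F i a b)

lemma expand3' (A : ContinuousMultilinearMap 𝕂 (fun _ : Fin 3 => PiLp 4 (fun _ : Fin n => 𝕂)) 𝕂)
    (u v w : Fin n → 𝕂) :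
    A ![Xv u, Xv v, Xv w]
      = ∑ i, ∑ k, ∑ j, u i * v k * w j * A ![e4 n i, e4 n k, e4 n j] := by
  have hm : ![Xv u, Xv v, Xv w] = fun k : Fin 3 => ∑ j, (![u, v, w] k j) • e4 n j := by
    funext k
    fin_cases k <;> simp [Xv_sum]
  rw [hm]
  have hs := A.toMultilinearMap.map_sum (g := fun (k : Fin 3) (j : Fin n) => (![u, v, w] k j) • e4 n j)
  rw [show (A fun k : Fin 3 => ∑ j, (![u, v, w] k j) • e4 n j)
      = A.toMultilinearMap (fun k : Fin 3 => ∑ j, (![u, v, w] k j) • e4 n j) from rfl, hs]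
  have hterm : ∀ r : Fin 3 → Fin n,
      A.toMultilinearMap (fun k => (![u, v, w] k (r k)) • e4 n (r k))
        = u (r 0) * v (r 1) * w (r 2) * A ![e4 n (r 0), e4 n (r 1), e4 n (r 2)] := by
    intro r
    rw [MultilinearMap.map_smul_univ]
    have h1 : (fun k : Fin 3 => e4 (𝕂 := 𝕂) n (r k)) = ![e4 n (r 0), e4 n (r 1), e4 n (r 2)] := by
      funext k; fin_cases k <;> rfl
    rw [h1, Fin.prod_univ_three]
    simp only [smul_eq_mul]
    norm_num [Matrix.cons_val_zero, Matrix.cons_val_one]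
    exact Or.inl (Or.inl rfl)
  rw [Finset.sum_congr rfl fun r _ => hterm r]
  exact sum_fin3 (fun i k j => u i * v k * w j * A ![e4 n i, e4 n k, e4 n j])

lemma conj_sgR (b : Bool) : (starRingEnd 𝕂) (sgR 𝕂 b) = sgR 𝕂 b := by
  cases b <;> simp [sgR]

lemma ofReal_sgR (b : Bool) : ((sgR ℝ b : ℝ) : 𝕂) = sgR 𝕂 b := by
  cases b <;> simp [sgR]

lemma norm_sgR' (b : Bool) : ‖sgR 𝕂 b‖ = 1 := by cases b <;> simp [sgR]

lemma norm_prod3 (x y z : PiLp 4 (fun _ : Fin n => 𝕂))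
    (A : ContinuousMultilinearMap 𝕂 (fun _ : Fin 3 => PiLp 4 (fun _ : Fin n => 𝕂)) 𝕂) :
    ‖A ![x, y, z]‖ ≤ ‖A‖ * (‖x‖ * ‖y‖ * ‖z‖) := by
  have h := A.le_opNorm ![x, y, z]
  rwa [Fin.prod_univ_three, show (![x,y,z] 0 : PiLp 4 _) = x from rfl,
    show (![x,y,z] 1 : PiLp 4 _) = y from rfl, show (![x,y,z] 2 : PiLp 4 _) = z from rfl] at h

/-- The bilinear bound. -/
lemma bilinear_bound' (A : ContinuousMultilinearMap 𝕂 (fun _ : Fin 3 => PiLp 4 (fun _ : Fin n => 𝕂)) 𝕂)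
    (c w : Fin n → 𝕂) :
    ‖∑ i, ∑ j, c i * w j * A ![e4 n i, e4 n i, e4 n j]‖
      ≤ ‖A‖ * (∑ i, ‖c i‖ ^ 2) ^ ((1:ℝ)/2) * (∑ j, ‖w j‖ ^ (4:ℝ)) ^ ((1:ℝ)/4) := by
  classical
  set α' : Fin n → Fin n → Fin n → 𝕂 := fun i k j => A ![e4 n i, e4 n k, e4 n j] with hα'
  set P : Fin n → 𝕂 := fun i => if c i = 0 then 0 else ((‖c i‖ ^ (-(1:ℝ)/2) : ℝ) : 𝕂) * c i with hP
  set Q : Fin n → 𝕂 := fun i => ((‖c i‖ ^ ((1:ℝ)/2) : ℝ) : 𝕂) with hQ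
  have hPQ : ∀ i, P i * Q i = c i := by
    intro i
    by_cases h : c i = 0
    · simp [hP, hQ, h]
    · have hpos : (0:ℝ) < ‖c i‖ := norm_pos_iff.mpr h
      simp only [hP, hQ, if_neg h]
      rw [mul_comm _ (c i), mul_assoc, ← RCLike.ofReal_mul, ← Real.rpow_add hpos]
      norm_num
  have hnP : ∀ i, ‖P i‖ = ‖c i‖ ^ ((1:ℝ)/2) := by
    intro i
    by_cases h : c i = 0
    · simp [hP, h, Real.zero_rpow (by norm_num : (1:ℝ)/2 ≠ 0)]
    · have hpos : (0:ℝ) < ‖c i‖ := norm_pos_iff.mpr h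
      simp only [hP, if_neg h, norm_mul, RCLike.norm_ofReal,
        abs_of_nonneg (Real.rpow_nonneg hpos.le _)]
      nth_rewrite 2 [← Real.rpow_one (‖c i‖)]
      rw [← Real.rpow_add hpos]
      norm_num
  have hnQ : ∀ i, ‖Q i‖ = ‖c i‖ ^ ((1:ℝ)/2) := by
    intro i
    simp [hQ, RCLike.norm_ofReal, abs_of_nonneg (Real.rpow_nonneg (norm_nonneg _) _)]
  -- quarter-norm of the sign vectors
  have hnorm4 : ∀ (g : Fin n → 𝕂), (∀ i, ‖g i‖ = ‖c i‖ ^ ((1:ℝ)/2)) →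
      (∑ i, ‖g i‖ ^ (4:ℝ)) = ∑ i, ‖c i‖ ^ 2 := by
    intro g hg
    refine Finset.sum_congr rfl fun i _ => ?_
    rw [hg i, ← Real.rpow_mul (norm_nonneg (c i))]
    rw [show ((1:ℝ)/2 * 4) = (2:ℝ) by norm_num, Real.rpow_two]
  -- the two sign families
  set u : (Fin n → Bool) → Fin n → 𝕂 := fun s i => sgR 𝕂 (s i) * P i with hu
  set v : (Fin n → Bool) → Fin n → 𝕂 := fun s i => sgR 𝕂 (s i) * Q i with hv
  have key : ∑ s : Fin n → Bool, A ![Xv (u s), Xv (v s), Xv w]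
      = (2^n : 𝕂) * ∑ i, ∑ j, c i * w j * α' i i j := by
    have hterm : ∀ s, A ![Xv (u s), Xv (v s), Xv w]
        = ∑ i, ∑ k, sgR 𝕂 (s i) * sgR 𝕂 (s k) * (P i * Q k * ∑ j, w j * α' i k j) := by
      intro s
      rw [expand3' A (u s) (v s) w]
      simp only [Finset.mul_sum]
      refine Finset.sum_congr rfl fun i _ => Finset.sum_congr rfl fun k _ =>
        Finset.sum_congr rfl fun j _ => ?_
      simp only [hu, hv]
      ring
    rw [Finset.sum_congr rfl fun s _ => hterm s, I2M']
    congr 1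
    refine Finset.sum_congr rfl fun i _ => ?_
    rw [hPQ i, Finset.mul_sum]
    exact Finset.sum_congr rfl fun j _ => by ring
  have bound : ∀ s : Fin n → Bool, ‖A ![Xv (u s), Xv (v s), Xv w]‖
      ≤ ‖A‖ * (∑ i, ‖c i‖ ^ 2) ^ ((1:ℝ)/2) * (∑ j, ‖w j‖ ^ (4:ℝ)) ^ ((1:ℝ)/4) := by
    intro s
    refine le_trans (norm_prod3 _ _ _ A) ?_
    rw [norm_Xv', norm_Xv', norm_Xv']
    have h1 : (∑ i, ‖u s i‖ ^ (4:ℝ)) = ∑ i, ‖c i‖ ^ 2 := by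
      refine hnorm4 _ fun i => ?_
      simp only [hu, norm_mul, norm_sgR', one_mul, hnP]
    have h2 : (∑ i, ‖v s i‖ ^ (4:ℝ)) = ∑ i, ‖c i‖ ^ 2 := by
      refine hnorm4 _ fun i => ?_
      simp only [hv, norm_mul, norm_sgR', one_mul, hnQ]
    rw [h1, h2]
    have hS : (0:ℝ) ≤ ∑ i, ‖c i‖ ^ 2 := by positivity
    have hcomb : (∑ i, ‖c i‖ ^ 2) ^ ((1:ℝ)/4) * (∑ i, ‖c i‖ ^ 2) ^ ((1:ℝ)/4)
        = (∑ i, ‖c i‖ ^ 2) ^ ((1:ℝ)/2) := by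
      rw [← Real.rpow_add' hS (by norm_num)]
      norm_num
    refine le_of_eq ?_
    rw [← hcomb]
    ring
  -- combine
  have h2n : (0:ℝ) < 2^n := by positivity
  have hfinal : (2:ℝ)^n * ‖∑ i, ∑ j, c i * w j * α' i i j‖
      ≤ 2^n * (‖A‖ * (∑ i, ‖c i‖ ^ 2) ^ ((1:ℝ)/2) * (∑ j, ‖w j‖ ^ (4:ℝ)) ^ ((1:ℝ)/4)) := by
    have : ‖(2^n : 𝕂) * ∑ i, ∑ j, c i * w j * α' i i j‖
        = 2^n * ‖∑ i, ∑ j, c i * w j * α' i i j‖ := by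
      rw [norm_mul]
      norm_num
    rw [← this, ← key]
    refine le_trans (norm_sum_le _ _) ?_
    calc ∑ s : Fin n → Bool, ‖A ![Xv (u s), Xv (v s), Xv w]‖
        ≤ ∑ _s : Fin n → Bool, (‖A‖ * (∑ i, ‖c i‖ ^ 2) ^ ((1:ℝ)/2) * (∑ j, ‖w j‖ ^ (4:ℝ)) ^ ((1:ℝ)/4)) :=
          Finset.sum_le_sum fun s _ => bound s
      _ = 2^n * (‖A‖ * (∑ i, ‖c i‖ ^ 2) ^ ((1:ℝ)/2) * (∑ j, ‖w j‖ ^ (4:ℝ)) ^ ((1:ℝ)/4)) := by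
          rw [Finset.sum_const]
          simp [Finset.card_univ, nsmul_eq_mul]
  exact le_of_mul_le_mul_left (by linarith [hfinal]) h2n

/-- duality for the ℓ_{4/3} norm -/
lemma dual43 (σ : Fin n → 𝕂) (M₀ : ℝ) (hM : 0 ≤ M₀)
    (h : ∀ w : Fin n → 𝕂, ‖∑ j, w j * σ j‖ ≤ M₀ * (∑ j, ‖w j‖ ^ (4:ℝ)) ^ ((1:ℝ)/4)) :
    ∑ j, ‖σ j‖ ^ ((4:ℝ)/3) ≤ M₀ ^ ((4:ℝ)/3) := by
  classical
  set S := ∑ j, ‖σ j‖ ^ ((4:ℝ)/3) with hSdef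
  have hS0 : 0 ≤ S := Finset.sum_nonneg fun j _ => Real.rpow_nonneg (norm_nonneg _) _
  set w : Fin n → 𝕂 := fun j => (starRingEnd 𝕂) (σ j) * ((‖σ j‖ ^ (-(2:ℝ)/3) : ℝ) : 𝕂) with hw
  have hws : ∀ j, w j * σ j = ((‖σ j‖ ^ ((4:ℝ)/3) : ℝ) : 𝕂) := by
    intro j
    by_cases hz : σ j = 0
    · simp [hw, hz, Real.zero_rpow (by norm_num : (4:ℝ)/3 ≠ 0)]
    · have hpos : (0:ℝ) < ‖σ j‖ := norm_pos_iff.mpr hz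
      simp only [hw]
      rw [mul_comm ((starRingEnd 𝕂) (σ j)) _, mul_assoc, mul_comm ((starRingEnd 𝕂) (σ j)) (σ j),
        RCLike.mul_conj]
      rw [← RCLike.ofReal_pow, ← RCLike.ofReal_mul]
      congr 1
      rw [← Real.rpow_natCast (‖σ j‖) 2, ← Real.rpow_add hpos]
      norm_num
  have hwn : ∀ j, ‖w j‖ ^ (4:ℝ) = ‖σ j‖ ^ ((4:ℝ)/3) := by
    intro j
    by_cases hz : σ j = 0
    · simp only [hw, hz, map_zero, zero_mul, norm_zero]
      rw [Real.zero_rpow (by norm_num : (4:ℝ) ≠ 0), Real.zero_rpow (by norm_num : (4:ℝ)/3 ≠ 0)]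
    · have hpos : (0:ℝ) < ‖σ j‖ := norm_pos_iff.mpr hz
      simp only [hw]
      rw [norm_mul, RCLike.norm_conj, RCLike.norm_ofReal,
        abs_of_nonneg (Real.rpow_nonneg hpos.le _)]
      nth_rewrite 1 [← Real.rpow_one (‖σ j‖)]
      rw [← Real.rpow_add hpos, ← Real.rpow_mul hpos.le]
      norm_num
  have hsum : ∑ j, w j * σ j = ((S : ℝ) : 𝕂) := by
    rw [hSdef, RCLike.ofReal_sum]
    exact Finset.sum_congr rfl fun j _ => hws j
  have hnorm : ‖∑ j, w j * σ j‖ = S := by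
    rw [hsum, RCLike.norm_ofReal, abs_of_nonneg hS0]
  have h4 : (∑ j, ‖w j‖ ^ (4:ℝ)) = S := by
    rw [hSdef]; exact Finset.sum_congr rfl fun j _ => hwn j
  have hineq : S ≤ M₀ * S ^ ((1:ℝ)/4) := by
    have := h w; rw [hnorm, h4] at this; exact this
  by_cases hS : S = 0
  · rw [hS]; exact Real.rpow_nonneg hM _
  · have hSpos : 0 < S := lt_of_le_of_ne hS0 (Ne.symm hS)
    have h34 : S ^ ((3:ℝ)/4) ≤ M₀ := by
      have hmul : S ^ ((3:ℝ)/4) * S ^ ((1:ℝ)/4) = S := by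
        rw [← Real.rpow_add hSpos]; norm_num
      have hq : 0 < S ^ ((1:ℝ)/4) := Real.rpow_pos_of_pos hSpos _
      have := hineq
      nlinarith [hq, hmul]
    calc S = (S ^ ((3:ℝ)/4)) ^ ((4:ℝ)/3) := by
          rw [← Real.rpow_mul hS0]; norm_num
      _ ≤ M₀ ^ ((4:ℝ)/3) :=
          Real.rpow_le_rpow (Real.rpow_nonneg hS0 _) h34 (by norm_num)

lemma rp_sq (t : ℝ) (ht : 0 ≤ t) (p : ℝ) : (t ^ p) ^ 2 = t ^ (2 * p) := by
  rw [← Real.rpow_natCast (t ^ p) 2, ← Real.rpow_mul ht]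
  norm_num [mul_comm]

lemma Kineq (A : ContinuousMultilinearMap 𝕂 (fun _ : Fin 3 => PiLp 4 (fun _ : Fin n => 𝕂)) 𝕂)
    (d : Fin n → ℝ) (hd : ∀ i, 0 ≤ d i) :
    ∑ j, (∑ i, d i * ‖A ![e4 n i, e4 n i, e4 n j]‖ ^ 2) ^ ((2:ℝ)/3)
      ≤ 3 ^ ((1:ℝ)/3) * ‖A‖ ^ ((4:ℝ)/3) * (∑ i, d i) ^ ((2:ℝ)/3) := by
  classical
  set α : Fin n → Fin n → 𝕂 := fun i j => A ![e4 n i, e4 n i, e4 n j] with hα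
  set M := ‖A‖ with hM
  have hM0 : 0 ≤ M := norm_nonneg A
  set D := ∑ i, d i with hD
  have hD0 : 0 ≤ D := Finset.sum_nonneg fun i _ => hd i
  set c : Fin n → ℝ := fun i => Real.sqrt (d i) with hc
  have hc2 : ∀ i, c i ^ 2 = d i := fun i => Real.sq_sqrt (hd i)
  have hc0 : ∀ i, 0 ≤ c i := fun i => Real.sqrt_nonneg _
  set T : Fin n → ℝ := fun j => ∑ i, d i * ‖α i j‖ ^ 2 with hT
  have hT0 : ∀ j, 0 ≤ T j :=
    fun j => Finset.sum_nonneg fun i _ => mul_nonneg (hd i) (sq_nonneg _)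
  set B := (2:ℝ)^n with hB
  have hB0 : (0:ℝ) < B := by positivity
  set σ : (Fin n → Bool) → Fin n → 𝕂 :=
    fun s j => ∑ i, (sgR 𝕂 (s i) * (c i : 𝕂)) * α i j with hσ
  -- step (a)
  have stepA : ∀ s, ∑ j, ‖σ s j‖ ^ ((4:ℝ)/3) ≤ (M * D ^ ((1:ℝ)/2)) ^ ((4:ℝ)/3) := by
    intro s
    refine dual43 _ _ (by positivity) fun w => ?_
    have hswap : ∑ j, w j * σ s j
        = ∑ i, ∑ j, (sgR 𝕂 (s i) * (c i : 𝕂)) * w j * α i j := by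
      simp only [hσ, Finset.mul_sum]
      rw [Finset.sum_comm]
      exact Finset.sum_congr rfl fun i _ => Finset.sum_congr rfl fun j _ => by ring
    rw [hswap]
    have hnormc : (∑ i, ‖sgR 𝕂 (s i) * (c i : 𝕂)‖ ^ 2) = D := by
      rw [hD]
      refine Finset.sum_congr rfl fun i _ => ?_
      rw [norm_mul, norm_sgR', one_mul, RCLike.norm_ofReal, abs_of_nonneg (hc0 i), hc2 i]
    have := bilinear_bound' A (fun i => sgR 𝕂 (s i) * (c i : 𝕂)) w
    rw [hnormc] at this
    calc ‖∑ i, ∑ j, (sgR 𝕂 (s i) * (c i : 𝕂)) * w j * α i j‖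
        ≤ M * D ^ ((1:ℝ)/2) * (∑ j, ‖w j‖ ^ (4:ℝ)) ^ ((1:ℝ)/4) := this
      _ = M * D ^ ((1:ℝ)/2) * (∑ j, ‖w j‖ ^ (4:ℝ)) ^ ((1:ℝ)/4) := rfl
  -- step (b1) : second moment identity
  have stepB1 : ∀ j, ∑ s : Fin n → Bool, ‖σ s j‖ ^ 2 = B * T j := by
    intro j
    have hconj : ∀ s, (starRingEnd 𝕂) (σ s j)
        = ∑ i, (sgR 𝕂 (s i) * (c i : 𝕂)) * (starRingEnd 𝕂) (α i j) := by
      intro s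
      rw [hσ, map_sum]
      refine Finset.sum_congr rfl fun i _ => ?_
      rw [map_mul, map_mul, conj_sgR, RCLike.conj_ofReal]
    have hKid : ∑ s : Fin n → Bool, (starRingEnd 𝕂) (σ s j) * σ s j
        = ((B * T j : ℝ) : 𝕂) := by
      have hper : ∀ s, (starRingEnd 𝕂) (σ s j) * σ s j
          = ∑ i, ∑ k, sgR 𝕂 (s i) * sgR 𝕂 (s k)
              * (((c i : 𝕂) * (starRingEnd 𝕂) (α i j)) * ((c k : 𝕂) * α k j)) := by
        intro s
        rw [hconj s, hσ]
        rw [Finset.sum_mul_sum]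
        exact Finset.sum_congr rfl fun i _ => Finset.sum_congr rfl fun k _ => by ring
      rw [Finset.sum_congr rfl fun s _ => hper s, I2M']
      have hdiag : ∀ i, ((c i : 𝕂) * (starRingEnd 𝕂) (α i j)) * ((c i : 𝕂) * α i j)
          = ((d i * ‖α i j‖ ^ 2 : ℝ) : 𝕂) := by
        intro i
        rw [show ((c i : 𝕂) * (starRingEnd 𝕂) (α i j)) * ((c i : 𝕂) * α i j)
            = ((c i : 𝕂) * (c i : 𝕂)) * ((starRingEnd 𝕂) (α i j) * α i j) from by ring]
        rw [RCLike.conj_mul, ← RCLike.ofReal_mul, ← RCLike.ofReal_pow, ← RCLike.ofReal_mul]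
        congr 1
        rw [← hc2 i]
        ring
      rw [Finset.sum_congr rfl fun i _ => hdiag i, ← RCLike.ofReal_sum]
      have hTj : T j = ∑ i, d i * ‖α i j‖ ^ 2 := rfl
      rw [hTj, hB]
      push_cast
      ring
    have hLHS : ∑ s : Fin n → Bool, (starRingEnd 𝕂) (σ s j) * σ s j
        = (((∑ s : Fin n → Bool, ‖σ s j‖ ^ 2 : ℝ)) : 𝕂) := by
      rw [RCLike.ofReal_sum]
      refine Finset.sum_congr rfl fun s _ => ?_
      rw [RCLike.conj_mul]
      push_cast
      ring
    have := hLHS.symm.trans hKid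
    exact_mod_cast RCLike.ofReal_injective this
  -- step (b2) : fourth moment bound
  have stepB2 : ∀ j, ∑ s : Fin n → Bool, ‖σ s j‖ ^ 4 ≤ 3 * B * (T j) ^ 2 := by
    intro j
    set x : Fin n → ℝ := fun i => c i * RCLike.re (α i j) with hx
    set y : Fin n → ℝ := fun i => c i * RCLike.im (α i j) with hy
    have hre : ∀ s, RCLike.re (σ s j) = ∑ i, sgR ℝ (s i) * x i := by
      intro s
      rw [hσ, map_sum]
      refine Finset.sum_congr rfl fun i _ => ?_
      rw [show sgR 𝕂 (s i) * (c i : 𝕂) = ((sgR ℝ (s i) * c i : ℝ) : 𝕂) from by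
        rw [RCLike.ofReal_mul, ofReal_sgR], RCLike.re_ofReal_mul]
      rw [hx]; ring
    have him : ∀ s, RCLike.im (σ s j) = ∑ i, sgR ℝ (s i) * y i := by
      intro s
      rw [hσ, map_sum]
      refine Finset.sum_congr rfl fun i _ => ?_
      rw [show sgR 𝕂 (s i) * (c i : 𝕂) = ((sgR ℝ (s i) * c i : ℝ) : 𝕂) from by
        rw [RCLike.ofReal_mul, ofReal_sgR], RCLike.im_ofReal_mul]
      rw [hy]; ring
    have hsq : ∀ s, ‖σ s j‖ ^ 2
        = (∑ i, sgR ℝ (s i) * x i) ^ 2 + (∑ i, sgR ℝ (s i) * y i) ^ 2 := by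
      intro s
      rw [RCLike.norm_sq_eq_def, hre s, him s]
      ring
    have h4 : ∀ s, ‖σ s j‖ ^ 4
        = (∑ i, sgR ℝ (s i) * x i) ^ 2 * (∑ i, sgR ℝ (s i) * x i) ^ 2
          + 2 * ((∑ i, sgR ℝ (s i) * x i) ^ 2 * (∑ i, sgR ℝ (s i) * y i) ^ 2)
          + (∑ i, sgR ℝ (s i) * y i) ^ 2 * (∑ i, sgR ℝ (s i) * y i) ^ 2 := by
      intro s
      have : ‖σ s j‖ ^ 4 = (‖σ s j‖ ^ 2) ^ 2 := by ring
      rw [this, hsq s]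
      ring
    rw [Finset.sum_congr rfl fun s _ => h4 s, Finset.sum_add_distrib, Finset.sum_add_distrib,
      ← Finset.mul_sum, I4' x x, I4' x y, I4' y y]
    set XX := ∑ i, x i ^ 2 with hXX
    set YY := ∑ i, y i ^ 2 with hYY
    have hXX0 : 0 ≤ XX := Finset.sum_nonneg fun i _ => sq_nonneg _
    have hYY0 : 0 ≤ YY := Finset.sum_nonneg fun i _ => sq_nonneg _
    have hCS : (∑ i, x i * y i) ^ 2 ≤ XX * YY :=
      Finset.sum_mul_sq_le_sq_mul_sq Finset.univ x y
    have hCSxx : (∑ i, x i * x i) ^ 2 ≤ XX * XX := by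
      have := Finset.sum_mul_sq_le_sq_mul_sq Finset.univ x x
      simpa [hXX] using this
    have hTXY : XX + YY = T j := by
      rw [hXX, hYY, hT, ← Finset.sum_add_distrib]
      refine Finset.sum_congr rfl fun i _ => ?_
      rw [hx, hy]
      have : ‖α i j‖ ^ 2 = RCLike.re (α i j) * RCLike.re (α i j)
          + RCLike.im (α i j) * RCLike.im (α i j) := RCLike.norm_sq_eq_def
      rw [this, ← hc2 i]
      ring
    have hx4 : 0 ≤ ∑ i, x i ^ 2 * x i ^ 2 := Finset.sum_nonneg fun i _ => by positivity
    have hy4 : 0 ≤ ∑ i, y i ^ 2 * y i ^ 2 := Finset.sum_nonneg fun i _ => by positivity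
    have hxy2 : 0 ≤ ∑ i, x i ^ 2 * y i ^ 2 := Finset.sum_nonneg fun i _ => by positivity
    have hxx2 : (∑ i, x i * x i) = XX := by
      rw [hXX]; exact Finset.sum_congr rfl fun i _ => by ring
    have hyy2 : (∑ i, y i * y i) = YY := by
      rw [hYY]; exact Finset.sum_congr rfl fun i _ => by ring
    rw [hxx2, hyy2]
    have h2n : (0:ℝ) < 2^n := by positivity
    have key : 2 ^ n * (XX * XX + 2 * XX ^ 2 - 2 * ∑ i, x i ^ 2 * x i ^ 2) +
          2 * (2 ^ n * (XX * YY + 2 * (∑ i, x i * y i) ^ 2 - 2 * ∑ i, x i ^ 2 * y i ^ 2)) +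
        2 ^ n * (YY * YY + 2 * YY ^ 2 - 2 * ∑ i, y i ^ 2 * y i ^ 2)
        ≤ 3 * 2 ^ n * (XX + YY) ^ 2 := by
      nlinarith [mul_le_mul_of_nonneg_left hCS h2n.le, mul_nonneg h2n.le hx4,
        mul_nonneg h2n.le hy4, mul_nonneg h2n.le hxy2]
    rw [hTXY] at key
    calc 2 ^ n * (XX * XX + 2 * XX ^ 2 - 2 * ∑ i, x i ^ 2 * x i ^ 2) +
          2 * (2 ^ n * (XX * YY + 2 * (∑ i, x i * y i) ^ 2 - 2 * ∑ i, x i ^ 2 * y i ^ 2)) +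
        2 ^ n * (YY * YY + 2 * YY ^ 2 - 2 * ∑ i, y i ^ 2 * y i ^ 2)
        ≤ 3 * 2 ^ n * (T j) ^ 2 := key
      _ = 3 * B * (T j) ^ 2 := by rw [hB]
  -- step (c)
  have stepC : ∀ j, (T j) ^ ((2:ℝ)/3)
      ≤ 3 ^ ((1:ℝ)/3) * ((∑ s : Fin n → Bool, ‖σ s j‖ ^ ((4:ℝ)/3)) / B) := by
    intro j
    set E43 := ∑ s : Fin n → Bool, ‖σ s j‖ ^ ((4:ℝ)/3) with hE43
    have hE430 : 0 ≤ E43 := Finset.sum_nonneg fun s _ => Real.rpow_nonneg (norm_nonneg _) _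
    set E83 := ∑ s : Fin n → Bool, ‖σ s j‖ ^ ((8:ℝ)/3) with hE83
    have hE830 : 0 ≤ E83 := Finset.sum_nonneg fun s _ => Real.rpow_nonneg (norm_nonneg _) _
    have cs1 : (∑ s : Fin n → Bool, ‖σ s j‖ ^ 2) ^ 2 ≤ E43 * E83 := by
      have h := Finset.sum_mul_sq_le_sq_mul_sq Finset.univ
        (fun s : Fin n → Bool => ‖σ s j‖ ^ ((2:ℝ)/3)) (fun s => ‖σ s j‖ ^ ((4:ℝ)/3))
      have h1 : ∀ s : Fin n → Bool, ‖σ s j‖ ^ ((2:ℝ)/3) * ‖σ s j‖ ^ ((4:ℝ)/3) = ‖σ s j‖ ^ 2 := by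
        intro s
        rw [← Real.rpow_add' (norm_nonneg _) (by norm_num)]
        norm_num [Real.rpow_two]
      have h2 : ∀ s : Fin n → Bool, (‖σ s j‖ ^ ((2:ℝ)/3)) ^ 2 = ‖σ s j‖ ^ ((4:ℝ)/3) := by
        intro s; rw [rp_sq _ (norm_nonneg _)]; norm_num
      have h3 : ∀ s : Fin n → Bool, (‖σ s j‖ ^ ((4:ℝ)/3)) ^ 2 = ‖σ s j‖ ^ ((8:ℝ)/3) := by
        intro s; rw [rp_sq _ (norm_nonneg _)]; norm_num
      calc (∑ s : Fin n → Bool, ‖σ s j‖ ^ 2) ^ 2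
          = (∑ s : Fin n → Bool, ‖σ s j‖ ^ ((2:ℝ)/3) * ‖σ s j‖ ^ ((4:ℝ)/3)) ^ 2 := by
            rw [Finset.sum_congr rfl fun s _ => (h1 s)]
        _ ≤ (∑ s : Fin n → Bool, (‖σ s j‖ ^ ((2:ℝ)/3)) ^ 2)
              * ∑ s : Fin n → Bool, (‖σ s j‖ ^ ((4:ℝ)/3)) ^ 2 := h
        _ = E43 * E83 := by
            rw [Finset.sum_congr rfl fun s _ => (h2 s), Finset.sum_congr rfl fun s _ => (h3 s)]
    have cs2 : E83 ^ 2 ≤ E43 * ∑ s : Fin n → Bool, ‖σ s j‖ ^ 4 := by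
      have h := Finset.sum_mul_sq_le_sq_mul_sq Finset.univ
        (fun s : Fin n → Bool => ‖σ s j‖ ^ ((2:ℝ)/3)) (fun s => ‖σ s j‖ ^ 2)
      have h1 : ∀ s : Fin n → Bool, ‖σ s j‖ ^ ((2:ℝ)/3) * ‖σ s j‖ ^ 2 = ‖σ s j‖ ^ ((8:ℝ)/3) := by
        intro s
        rw [← Real.rpow_two, ← Real.rpow_add' (norm_nonneg _) (by norm_num)]
        norm_num
      have h2 : ∀ s : Fin n → Bool, (‖σ s j‖ ^ ((2:ℝ)/3)) ^ 2 = ‖σ s j‖ ^ ((4:ℝ)/3) := by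
        intro s; rw [rp_sq _ (norm_nonneg _)]; norm_num
      have h3 : ∀ s : Fin n → Bool, (‖σ s j‖ ^ 2) ^ 2 = ‖σ s j‖ ^ 4 := fun s => by ring
      calc E83 ^ 2 = (∑ s : Fin n → Bool, ‖σ s j‖ ^ ((2:ℝ)/3) * ‖σ s j‖ ^ 2) ^ 2 := by
            rw [hE83, Finset.sum_congr rfl fun s _ => (h1 s)]
        _ ≤ (∑ s : Fin n → Bool, (‖σ s j‖ ^ ((2:ℝ)/3)) ^ 2)
              * ∑ s : Fin n → Bool, (‖σ s j‖ ^ 2) ^ 2 := h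
        _ = E43 * ∑ s : Fin n → Bool, ‖σ s j‖ ^ 4 := by
            rw [Finset.sum_congr rfl fun s _ => (h2 s), Finset.sum_congr rfl fun s _ => (h3 s)]
    have hmom2 := stepB1 j
    have hmom4 := stepB2 j
    -- (B T)^4 ≤ 3 B E43^3 T^2
    have hW40 : 0 ≤ ∑ s : Fin n → Bool, ‖σ s j‖ ^ 4 :=
      Finset.sum_nonneg fun s _ => by positivity
    have hmain : (B * T j) ^ 4 ≤ 3 * B * E43 ^ 3 * (T j) ^ 2 := by
      have h1 : ((∑ s : Fin n → Bool, ‖σ s j‖ ^ 2) ^ 2) ^ 2 ≤ (E43 * E83) ^ 2 :=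
        pow_le_pow_left₀ (sq_nonneg _) cs1 2
      have h3 : E43 ^ 2 * E83 ^ 2 ≤ E43 ^ 2 * (E43 * ∑ s : Fin n → Bool, ‖σ s j‖ ^ 4) :=
        mul_le_mul_of_nonneg_left cs2 (by positivity)
      have h4 : E43 ^ 2 * (E43 * ∑ s : Fin n → Bool, ‖σ s j‖ ^ 4)
          ≤ E43 ^ 2 * (E43 * (3 * B * T j ^ 2)) :=
        mul_le_mul_of_nonneg_left (mul_le_mul_of_nonneg_left hmom4 hE430) (by positivity)
      calc (B * T j) ^ 4 = ((∑ s : Fin n → Bool, ‖σ s j‖ ^ 2) ^ 2) ^ 2 := by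
            rw [hmom2]; ring
        _ ≤ (E43 * E83) ^ 2 := h1
        _ = E43 ^ 2 * E83 ^ 2 := by ring
        _ ≤ E43 ^ 2 * (E43 * ∑ s : Fin n → Bool, ‖σ s j‖ ^ 4) := h3
        _ ≤ E43 ^ 2 * (E43 * (3 * B * T j ^ 2)) := h4
        _ = 3 * B * E43 ^ 3 * (T j) ^ 2 := by ring
    by_cases hTz : T j = 0
    · rw [hTz, Real.zero_rpow (by norm_num : (2:ℝ)/3 ≠ 0)]
      positivity
    · have hTpos : 0 < T j := lt_of_le_of_ne (hT0 j) (Ne.symm hTz)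
      have hT2 : (T j) ^ 2 ≤ 3 * (E43 / B) ^ 3 := by
        have hB4 : (0:ℝ) < B ^ 4 := by positivity
        have expand : (B * T j) ^ 4 = B ^ 4 * (T j) ^ 2 * (T j) ^ 2 := by ring
        have h1 : B ^ 4 * (T j) ^ 2 * (T j) ^ 2 ≤ 3 * B * E43 ^ 3 * (T j) ^ 2 := by
          rw [← expand]; exact hmain
        have h2 : B ^ 4 * (T j) ^ 2 ≤ 3 * B * E43 ^ 3 :=
          le_of_mul_le_mul_right h1 (by positivity)
        have h5 : (T j) ^ 2 ≤ 3 * B * E43 ^ 3 / B ^ 4 := by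
          rw [le_div_iff₀ hB4]
          linarith [h2]
        have h6 : 3 * B * E43 ^ 3 / B ^ 4 = 3 * (E43 / B) ^ 3 := by
          field_simp
        linarith [h5, h6.symm.le]
      have final : (T j) ^ ((2:ℝ)/3) ≤ 3 ^ ((1:ℝ)/3) * (E43 / B) := by
        have hu0 : 0 ≤ E43 / B := div_nonneg hE430 hB0.le
        have lhs_eq : (T j) ^ ((2:ℝ)/3) = ((T j) ^ 2) ^ ((1:ℝ)/3) := by
          rw [← Real.rpow_natCast (T j) 2, ← Real.rpow_mul (hT0 j)]
          norm_num
        have rhs_eq : (3 * (E43 / B) ^ 3) ^ ((1:ℝ)/3) = 3 ^ ((1:ℝ)/3) * (E43 / B) := by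
          rw [Real.mul_rpow (by norm_num) (by positivity)]
          congr 1
          rw [← Real.rpow_natCast (E43 / B) 3, ← Real.rpow_mul hu0]
          norm_num
        rw [lhs_eq, ← rhs_eq]
        exact Real.rpow_le_rpow (by positivity) hT2 (by norm_num)
      exact final
  -- combine over j
  calc ∑ j, (T j) ^ ((2:ℝ)/3)
      ≤ ∑ j, 3 ^ ((1:ℝ)/3) * ((∑ s : Fin n → Bool, ‖σ s j‖ ^ ((4:ℝ)/3)) / B) :=
        Finset.sum_le_sum fun j _ => stepC j
    _ = 3 ^ ((1:ℝ)/3) / B * ∑ j, ∑ s : Fin n → Bool, ‖σ s j‖ ^ ((4:ℝ)/3) := by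
        rw [Finset.mul_sum]
        exact Finset.sum_congr rfl fun j _ => by ring
    _ = 3 ^ ((1:ℝ)/3) / B * ∑ s : Fin n → Bool, ∑ j, ‖σ s j‖ ^ ((4:ℝ)/3) := by
        rw [Finset.sum_comm]
    _ ≤ 3 ^ ((1:ℝ)/3) / B * ∑ _s : Fin n → Bool, (M * D ^ ((1:ℝ)/2)) ^ ((4:ℝ)/3) :=
        mul_le_mul_of_nonneg_left (Finset.sum_le_sum fun s _ => stepA s)
          (div_nonneg (Real.rpow_nonneg (by norm_num) _) hB0.le)
    _ = 3 ^ ((1:ℝ)/3) / B * (B * (M * D ^ ((1:ℝ)/2)) ^ ((4:ℝ)/3)) := by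
        rw [Finset.sum_const, Finset.card_univ, nsmul_eq_mul]
        congr 1
        rw [hB]
        norm_num [Fintype.card_fun]
    _ = 3 ^ ((1:ℝ)/3) * (M * D ^ ((1:ℝ)/2)) ^ ((4:ℝ)/3) := by
        field_simp
    _ = 3 ^ ((1:ℝ)/3) * M ^ ((4:ℝ)/3) * D ^ ((2:ℝ)/3) := by
        rw [Real.mul_rpow hM0 (Real.rpow_nonneg hD0 _), ← Real.rpow_mul hD0]
        norm_num
        ring

/-- second moment identity -/
lemma mom2 (v : Fin n → 𝕂) :
    ∑ s : Fin n → Bool, ‖∑ j, sgR 𝕂 (s j) * v j‖ ^ 2 = 2^n * ∑ j, ‖v j‖ ^ 2 := by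
  classical
  have hconj : ∀ s : Fin n → Bool, (starRingEnd 𝕂) (∑ j, sgR 𝕂 (s j) * v j)
      = ∑ j, sgR 𝕂 (s j) * (starRingEnd 𝕂) (v j) := by
    intro s
    rw [map_sum]
    exact Finset.sum_congr rfl fun j _ => by rw [map_mul, conj_sgR]
  have hK : ∑ s : Fin n → Bool,
        (starRingEnd 𝕂) (∑ j, sgR 𝕂 (s j) * v j) * (∑ j, sgR 𝕂 (s j) * v j)
      = ((2^n * ∑ j, ‖v j‖ ^ 2 : ℝ) : 𝕂) := by
    rw [Finset.sum_congr rfl fun s _ => by rw [hconj s]]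
    rw [I2' (fun j => (starRingEnd 𝕂) (v j)) v]
    rw [Finset.sum_congr rfl fun j (_ : j ∈ Finset.univ) => RCLike.conj_mul (v j)]
    push_cast
    ring
  have hL : ∑ s : Fin n → Bool,
        (starRingEnd 𝕂) (∑ j, sgR 𝕂 (s j) * v j) * (∑ j, sgR 𝕂 (s j) * v j)
      = ((∑ s : Fin n → Bool, ‖∑ j, sgR 𝕂 (s j) * v j‖ ^ 2 : ℝ) : 𝕂) := by
    rw [RCLike.ofReal_sum]
    refine Finset.sum_congr rfl fun s _ => ?_
    rw [RCLike.conj_mul]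
    push_cast
    ring
  exact_mod_cast RCLike.ofReal_injective (hL.symm.trans hK)

/-- The main estimate: `Y ≤ √3 ‖A‖⁴`. -/
lemma Yineq (A : ContinuousMultilinearMap 𝕂 (fun _ : Fin 3 => PiLp 4 (fun _ : Fin n => 𝕂)) 𝕂) :
    ∑ i, (∑ j, ‖A ![e4 n i, e4 n i, e4 n j]‖ ^ 2) ^ 2
      ≤ 3 ^ ((1:ℝ)/2) * ‖A‖ ^ 4 := by
  classical
  set α : Fin n → Fin n → 𝕂 := fun i j => A ![e4 n i, e4 n i, e4 n j] with hα
  set M := ‖A‖ with hM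
  have hM0 : 0 ≤ M := norm_nonneg A
  set lam2 : Fin n → ℝ := fun i => ∑ j, ‖α i j‖ ^ 2 with hlam2
  have hlam20 : ∀ i, 0 ≤ lam2 i := fun i => Finset.sum_nonneg fun j _ => sq_nonneg _
  set Y := ∑ i, (lam2 i) ^ 2 with hY
  have hY0 : 0 ≤ Y := Finset.sum_nonneg fun i _ => sq_nonneg _
  set Q : Fin n → ℝ := fun j => ∑ i, (lam2 i) ^ 2 * ‖α i j‖ ^ 2 with hQ
  have hQ0 : ∀ j, 0 ≤ Q j :=
    fun j => Finset.sum_nonneg fun i _ => mul_nonneg (sq_nonneg _) (sq_nonneg _)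
  set U := ∑ j, (Q j) ^ ((2:ℝ)/3) with hU
  have hU0 : 0 ≤ U := Finset.sum_nonneg fun j _ => Real.rpow_nonneg (hQ0 j) _
  set B := (2:ℝ)^n with hB
  have hB0 : (0:ℝ) < B := by positivity
  set t : Fin n → ℝ := fun j => if Q j = 0 then 0 else (Q j) ^ ((1:ℝ)/6) with ht
  set r : Fin n → ℝ := fun j => if Q j = 0 then 0 else (Q j) ^ (-(1:ℝ)/6) with hr
  have ht0 : ∀ j, 0 ≤ t j := by
    intro j; simp only [ht]
    split
    · exact le_refl 0
    · exact Real.rpow_nonneg (hQ0 j) _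
  have hr0 : ∀ j, 0 ≤ r j := by
    intro j; simp only [hr]
    split
    · exact le_refl 0
    · exact Real.rpow_nonneg (hQ0 j) _
  have hQpos : ∀ j, Q j ≠ 0 → 0 < Q j := fun j h => lt_of_le_of_ne (hQ0 j) (Ne.symm h)
  have hrt : ∀ j, r j * t j = if Q j = 0 then 0 else 1 := by
    intro j
    simp only [hr, ht]
    by_cases h : Q j = 0
    · simp [h]
    · rw [if_neg h, if_neg h, if_neg h, ← Real.rpow_add (hQpos j h)]
      norm_num
  have hQzero : ∀ j, Q j = 0 → ∀ i, lam2 i * ‖α i j‖ ^ 2 = 0 := by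
    intro j hj i
    have h0 : ∀ i ∈ Finset.univ, 0 ≤ (lam2 i) ^ 2 * ‖α i j‖ ^ 2 :=
      fun i _ => mul_nonneg (sq_nonneg _) (sq_nonneg _)
    have hz := (Finset.sum_eq_zero_iff_of_nonneg h0).mp hj i (Finset.mem_univ i)
    have h1 : (lam2 i * ‖α i j‖) ^ 2 = 0 := by rw [mul_pow]; exact hz
    have h2 : lam2 i * ‖α i j‖ = 0 := by
      exact pow_eq_zero_iff (by norm_num) |>.mp h1
    rw [sq, ← mul_assoc, h2, zero_mul]
  -- vectors
  set vg : Fin n → Fin n → 𝕂 := fun i j => ((r j : ℝ) : 𝕂) * (starRingEnd 𝕂) (α i j) with hvg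
  set vh : Fin n → Fin n → 𝕂 := fun i j => ((t j : ℝ) : 𝕂) * α i j with hvh
  set g : Fin n → (Fin n → Bool) → 𝕂 := fun i s => ∑ j, sgR 𝕂 (s j) * vg i j with hg
  set h : Fin n → (Fin n → Bool) → 𝕂 := fun i s => ∑ j, sgR 𝕂 (s j) * vh i j with hh
  -- main identity
  have hgh : ∀ i, ((lam2 i : ℝ) : 𝕂) * ∑ s : Fin n → Bool, g i s * h i s
      = ((B * (lam2 i) ^ 2 : ℝ) : 𝕂) := by
    intro i
    rw [hg, hh, I2' (fun j => vg i j) (fun j => vh i j)]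
    have hdiag : ∀ j, vg i j * vh i j = ((r j * t j * ‖α i j‖ ^ 2 : ℝ) : 𝕂) := by
      intro j
      rw [hvg, hvh]
      rw [show ((r j : ℝ) : 𝕂) * (starRingEnd 𝕂) (α i j) * (((t j : ℝ) : 𝕂) * α i j)
          = ((r j : ℝ) : 𝕂) * ((t j : ℝ) : 𝕂) * ((starRingEnd 𝕂) (α i j) * α i j) from by ring]
      rw [RCLike.conj_mul]
      push_cast
      ring
    rw [Finset.sum_congr rfl fun j _ => hdiag j, ← RCLike.ofReal_sum]
    have hreal : lam2 i * ∑ j, r j * t j * ‖α i j‖ ^ 2 = (lam2 i) ^ 2 := by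
      rw [Finset.mul_sum]
      have hterm : ∀ j, lam2 i * (r j * t j * ‖α i j‖ ^ 2) = lam2 i * ‖α i j‖ ^ 2 := by
        intro j
        rw [hrt j]
        by_cases hq : Q j = 0
        · rw [if_pos hq, hQzero j hq i]
          ring
        · rw [if_neg hq]
          ring
      rw [Finset.sum_congr rfl fun j _ => hterm j, ← Finset.mul_sum]
      rw [show (∑ j, ‖α i j‖ ^ 2) = lam2 i from rfl]
      ring
    rw [show ((2:𝕂)^n) = ((B : ℝ) : 𝕂) from by rw [hB]; push_cast; ring]
    rw [← RCLike.ofReal_mul, ← RCLike.ofReal_mul]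
    rw [show B * (lam2 i)^2 = lam2 i * (B * ∑ j, r j * t j * ‖α i j‖ ^ 2) from by
      rw [show B * (lam2 i)^2 = B * (lam2 i * ∑ j, r j * t j * ‖α i j‖ ^ 2) from by rw [hreal]]
      ring]
  -- bilinear bound for each sign pattern
  have hGnn : ∀ s, (0:ℝ) ≤ ∑ i, (lam2 i)^2 * ‖g i s‖^2 :=
    fun s => Finset.sum_nonneg fun i _ => mul_nonneg (sq_nonneg _) (sq_nonneg _)
  have hbound : ∀ s, ‖∑ i, ((lam2 i : ℝ) : 𝕂) * (g i s * h i s)‖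
      ≤ M * (∑ i, (lam2 i)^2 * ‖g i s‖^2) ^ ((1:ℝ)/2) * U ^ ((1:ℝ)/4) := by
    intro s
    have hrw : ∑ i, ((lam2 i : ℝ) : 𝕂) * (g i s * h i s)
        = ∑ i, ∑ j, (((lam2 i : ℝ) : 𝕂) * g i s) * (sgR 𝕂 (s j) * ((t j : ℝ) : 𝕂)) * α i j := by
      refine Finset.sum_congr rfl fun i _ => ?_
      rw [hh, Finset.mul_sum, Finset.mul_sum]
      refine Finset.sum_congr rfl fun j _ => ?_
      rw [hvh]
      ring
    rw [hrw]
    have hb := bilinear_bound' A (fun i => ((lam2 i : ℝ) : 𝕂) * g i s)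
      (fun j => sgR 𝕂 (s j) * ((t j : ℝ) : 𝕂))
    have hcn : (∑ i, ‖((lam2 i : ℝ) : 𝕂) * g i s‖ ^ 2) = ∑ i, (lam2 i)^2 * ‖g i s‖^2 := by
      refine Finset.sum_congr rfl fun i _ => ?_
      rw [norm_mul, RCLike.norm_ofReal, abs_of_nonneg (hlam20 i), mul_pow]
    have hwn : (∑ j, ‖sgR 𝕂 (s j) * ((t j : ℝ) : 𝕂)‖ ^ (4:ℝ)) ≤ U := by
      rw [hU]
      refine Finset.sum_le_sum fun j _ => ?_
      rw [norm_mul, norm_sgR', one_mul, RCLike.norm_ofReal, abs_of_nonneg (ht0 j)]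
      simp only [ht]
      by_cases hq : Q j = 0
      · rw [if_pos hq, Real.zero_rpow (by norm_num : (4:ℝ) ≠ 0)]
        exact Real.rpow_nonneg (hQ0 j) _
      · rw [if_neg hq, ← Real.rpow_mul (hQ0 j)]
        norm_num
    calc ‖∑ i, ∑ j, (((lam2 i : ℝ) : 𝕂) * g i s) * (sgR 𝕂 (s j) * ((t j : ℝ) : 𝕂)) * α i j‖
        ≤ M * (∑ i, ‖((lam2 i : ℝ) : 𝕂) * g i s‖ ^ 2) ^ ((1:ℝ)/2)
            * (∑ j, ‖sgR 𝕂 (s j) * ((t j : ℝ) : 𝕂)‖ ^ (4:ℝ)) ^ ((1:ℝ)/4) := hb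
      _ ≤ M * (∑ i, (lam2 i)^2 * ‖g i s‖^2) ^ ((1:ℝ)/2) * U ^ ((1:ℝ)/4) := by
          rw [hcn]
          refine mul_le_mul_of_nonneg_left ?_ (by positivity)
          exact Real.rpow_le_rpow (Finset.sum_nonneg fun j _ => Real.rpow_nonneg (norm_nonneg _) _)
            hwn (by norm_num)
  -- second moment of g
  have hg2 : ∀ i, ∑ s : Fin n → Bool, ‖g i s‖^2 = B * ∑ j, (r j)^2 * ‖α i j‖^2 := by
    intro i
    rw [hg, mom2 (vg i), hB]
    congr 1
    refine Finset.sum_congr rfl fun j _ => ?_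
    rw [hvg, norm_mul, RCLike.norm_ofReal, RCLike.norm_conj,
      abs_of_nonneg (hr0 j), mul_pow]
  have hr2Q : ∀ j, (r j)^2 * Q j ≤ (Q j) ^ ((2:ℝ)/3) := by
    intro j
    simp only [hr]
    by_cases hq : Q j = 0
    · rw [if_pos hq, hq]
      norm_num
    · rw [if_neg hq, rp_sq _ (hQ0 j)]
      nth_rewrite 2 [show Q j = (Q j) ^ (1:ℝ) from (Real.rpow_one _).symm]
      rw [← Real.rpow_add (hQpos j hq)]
      norm_num
  have hGsum : ∑ s : Fin n → Bool, ∑ i, (lam2 i)^2 * ‖g i s‖^2 ≤ B * U := by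
    rw [Finset.sum_comm]
    calc ∑ i, ∑ s : Fin n → Bool, (lam2 i)^2 * ‖g i s‖^2
        = ∑ i, (lam2 i)^2 * (B * ∑ j, (r j)^2 * ‖α i j‖^2) := by
          refine Finset.sum_congr rfl fun i _ => ?_
          rw [← Finset.mul_sum, hg2 i]
      _ = ∑ i, ∑ j, B * ((lam2 i)^2 * ((r j)^2 * ‖α i j‖^2)) := by
          refine Finset.sum_congr rfl fun i _ => ?_
          simp only [Finset.mul_sum]
          exact Finset.sum_congr rfl fun j _ => by ring
      _ = ∑ j, ∑ i, B * ((lam2 i)^2 * ((r j)^2 * ‖α i j‖^2)) := Finset.sum_comm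
      _ = B * ∑ j, (r j)^2 * Q j := by
          rw [Finset.mul_sum]
          refine Finset.sum_congr rfl fun j _ => ?_
          simp only [hQ, Finset.mul_sum]
          exact Finset.sum_congr rfl fun i _ => by ring
      _ ≤ B * U := by
          rw [hU]
          exact mul_le_mul_of_nonneg_left (Finset.sum_le_sum fun j _ => hr2Q j) hB0.le
  -- Cauchy-Schwarz over signs
  have hCSs : ∑ s : Fin n → Bool, (∑ i, (lam2 i)^2 * ‖g i s‖^2) ^ ((1:ℝ)/2)
      ≤ B * U ^ ((1:ℝ)/2) := by
    have hcs := Finset.sum_mul_sq_le_sq_mul_sq Finset.univ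
      (fun s : Fin n → Bool => (∑ i, (lam2 i)^2 * ‖g i s‖^2) ^ ((1:ℝ)/2)) (fun _ => (1:ℝ))
    simp only [mul_one, one_pow] at hcs
    have hsq : ∀ s : Fin n → Bool, ((∑ i, (lam2 i)^2 * ‖g i s‖^2) ^ ((1:ℝ)/2)) ^ 2
        = ∑ i, (lam2 i)^2 * ‖g i s‖^2 := by
      intro s
      rw [rp_sq _ (hGnn s)]
      norm_num
    rw [Finset.sum_congr rfl fun s _ => hsq s] at hcs
    have hcard : ∑ _s : Fin n → Bool, (1:ℝ) = B := by
      rw [Finset.sum_const, Finset.card_univ, nsmul_eq_mul, hB]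
      norm_num [Fintype.card_fun]
    rw [hcard] at hcs
    have h2 : (∑ s : Fin n → Bool, (∑ i, (lam2 i)^2 * ‖g i s‖^2) ^ ((1:ℝ)/2)) ^ 2
        ≤ (B * U ^ ((1:ℝ)/2)) ^ 2 := by
      calc (∑ s : Fin n → Bool, (∑ i, (lam2 i)^2 * ‖g i s‖^2) ^ ((1:ℝ)/2)) ^ 2
          ≤ (∑ s : Fin n → Bool, ∑ i, (lam2 i)^2 * ‖g i s‖^2) * B := hcs
        _ ≤ (B * U) * B := mul_le_mul_of_nonneg_right hGsum hB0.le
        _ = (B * U ^ ((1:ℝ)/2)) ^ 2 := by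
            rw [mul_pow, rp_sq _ hU0]
            norm_num [Real.rpow_one]
            ring
    have hLnn : 0 ≤ ∑ s : Fin n → Bool, (∑ i, (lam2 i)^2 * ‖g i s‖^2) ^ ((1:ℝ)/2) :=
      Finset.sum_nonneg fun s _ => Real.rpow_nonneg (hGnn s) _
    have hRnn : 0 ≤ B * U ^ ((1:ℝ)/2) := mul_nonneg hB0.le (Real.rpow_nonneg hU0 _)
    nlinarith [h2, hLnn, hRnn]
  -- put everything together : B*Y ≤ M * U^{1/4} * (B * U^{1/2})
  have hper : ∀ i, ∑ s : Fin n → Bool, ((lam2 i : ℝ) : 𝕂) * (g i s * h i s)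
      = ((B * (lam2 i) ^ 2 : ℝ) : 𝕂) := by
    intro i
    rw [← Finset.mul_sum]
    exact hgh i
  have hBY : ((B * Y : ℝ) : 𝕂) = ∑ s : Fin n → Bool, ∑ i, ((lam2 i : ℝ) : 𝕂) * (g i s * h i s) := by
    calc ((B * Y : ℝ) : 𝕂) = ∑ i, ((B * (lam2 i) ^ 2 : ℝ) : 𝕂) := by
          rw [← RCLike.ofReal_sum]
          congr 1
          rw [hY, Finset.mul_sum]
      _ = ∑ i, ∑ s : Fin n → Bool, ((lam2 i : ℝ) : 𝕂) * (g i s * h i s) :=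
          Finset.sum_congr rfl fun i _ => (hper i).symm
      _ = ∑ s : Fin n → Bool, ∑ i, ((lam2 i : ℝ) : 𝕂) * (g i s * h i s) := Finset.sum_comm
  have hYB : B * Y ≤ M * U ^ ((1:ℝ)/4) * (B * U ^ ((1:ℝ)/2)) := by
    have h1 : B * Y = ‖((B * Y : ℝ) : 𝕂)‖ := by
      rw [RCLike.norm_ofReal, abs_of_nonneg (mul_nonneg hB0.le hY0)]
    rw [h1, hBY]
    calc ‖∑ s : Fin n → Bool, ∑ i, ((lam2 i : ℝ) : 𝕂) * (g i s * h i s)‖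
        ≤ ∑ s : Fin n → Bool, ‖∑ i, ((lam2 i : ℝ) : 𝕂) * (g i s * h i s)‖ :=
          norm_sum_le _ _
      _ ≤ ∑ s : Fin n → Bool, M * (∑ i, (lam2 i)^2 * ‖g i s‖^2) ^ ((1:ℝ)/2) * U ^ ((1:ℝ)/4) :=
          Finset.sum_le_sum fun s _ => hbound s
      _ = M * U ^ ((1:ℝ)/4) * ∑ s : Fin n → Bool, (∑ i, (lam2 i)^2 * ‖g i s‖^2) ^ ((1:ℝ)/2) := by
          rw [Finset.mul_sum]
          exact Finset.sum_congr rfl fun s _ => by ring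
      _ ≤ M * U ^ ((1:ℝ)/4) * (B * U ^ ((1:ℝ)/2)) :=
          mul_le_mul_of_nonneg_left hCSs (by positivity)
  have hYU : Y ≤ M * U ^ ((3:ℝ)/4) := by
    have h34 : U ^ ((1:ℝ)/4) * U ^ ((1:ℝ)/2) = U ^ ((3:ℝ)/4) := by
      rw [← Real.rpow_add' hU0 (by norm_num)]
      norm_num
    have h2 : B * Y ≤ B * (M * U ^ ((3:ℝ)/4)) := by
      calc B * Y ≤ M * U ^ ((1:ℝ)/4) * (B * U ^ ((1:ℝ)/2)) := hYB
        _ = B * (M * (U ^ ((1:ℝ)/4) * U ^ ((1:ℝ)/2))) := by ring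
        _ = B * (M * U ^ ((3:ℝ)/4)) := by rw [h34]
    exact le_of_mul_le_mul_left h2 hB0
  -- apply the K-inequality
  have hKU : U ≤ 3 ^ ((1:ℝ)/3) * M ^ ((4:ℝ)/3) * Y ^ ((2:ℝ)/3) := by
    have := Kineq A (fun i => (lam2 i)^2) (fun i => sq_nonneg _)
    exact this
  -- final algebra
  have hKU34 : U ^ ((3:ℝ)/4) ≤ 3 ^ ((1:ℝ)/4) * M * Y ^ ((1:ℝ)/2) := by
    have h1 : U ^ ((3:ℝ)/4) ≤ (3 ^ ((1:ℝ)/3) * M ^ ((4:ℝ)/3) * Y ^ ((2:ℝ)/3)) ^ ((3:ℝ)/4) :=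
      Real.rpow_le_rpow hU0 hKU (by norm_num)
    have h2 : (3 ^ ((1:ℝ)/3) * M ^ ((4:ℝ)/3) * Y ^ ((2:ℝ)/3)) ^ ((3:ℝ)/4)
        = 3 ^ ((1:ℝ)/4) * M * Y ^ ((1:ℝ)/2) := by
      rw [Real.mul_rpow (mul_nonneg (Real.rpow_nonneg (by norm_num) _)
            (Real.rpow_nonneg hM0 _)) (Real.rpow_nonneg hY0 _),
        Real.mul_rpow (Real.rpow_nonneg (by norm_num) _) (Real.rpow_nonneg hM0 _),
        ← Real.rpow_mul (by norm_num : (0:ℝ) ≤ 3), ← Real.rpow_mul hM0, ← Real.rpow_mul hY0]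
      norm_num [Real.rpow_one]
    rw [h2] at h1
    exact h1
  have hfin : Y ≤ 3 ^ ((1:ℝ)/4) * M ^ 2 * Y ^ ((1:ℝ)/2) := by
    calc Y ≤ M * U ^ ((3:ℝ)/4) := hYU
      _ ≤ M * (3 ^ ((1:ℝ)/4) * M * Y ^ ((1:ℝ)/2)) :=
          mul_le_mul_of_nonneg_left hKU34 hM0
      _ = 3 ^ ((1:ℝ)/4) * M ^ 2 * Y ^ ((1:ℝ)/2) := by ring
  -- conclude Y ≤ √3 M⁴
  have hyh : (Y ^ ((1:ℝ)/2)) ^ 2 = Y := by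
    rw [rp_sq _ hY0]
    norm_num [Real.rpow_one]
  have hy0 : 0 ≤ Y ^ ((1:ℝ)/2) := Real.rpow_nonneg hY0 _
  have hfinal : Y ≤ 3 ^ ((1:ℝ)/2) * M ^ 4 := by
    by_cases hz : Y ^ ((1:ℝ)/2) = 0
    · have : Y = 0 := by rw [← hyh, hz]; norm_num
      rw [this]
      positivity
    · have hypos : 0 < Y ^ ((1:ℝ)/2) := lt_of_le_of_ne hy0 (Ne.symm hz)
      have step : Y ^ ((1:ℝ)/2) ≤ 3 ^ ((1:ℝ)/4) * M ^ 2 := by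
        have := hfin
        rw [← hyh] at this
        nlinarith [this, hypos]
      have h3 : (3:ℝ) ^ ((1:ℝ)/4) * (3:ℝ) ^ ((1:ℝ)/4) = 3 ^ ((1:ℝ)/2) := by
        rw [← Real.rpow_add (by norm_num : (0:ℝ) < 3)]
        norm_num
      calc Y = (Y ^ ((1:ℝ)/2)) ^ 2 := hyh.symm
        _ ≤ (3 ^ ((1:ℝ)/4) * M ^ 2) ^ 2 := by
            nlinarith [step, hy0]
        _ = 3 ^ ((1:ℝ)/2) * M ^ 4 := by
            rw [← h3]; ring
  exact hfinal

lemma row_mono {n : ℕ} (a : Fin n → ℝ) (ha : ∀ j, 0 ≤ a j) :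
    (∑ j, a j ^ ((12:ℝ)/5)) ^ ((5:ℝ)/3) ≤ (∑ j, a j ^ 2) ^ 2 := by
  set S2 := ∑ j, a j ^ 2 with hS2
  have hS20 : 0 ≤ S2 := Finset.sum_nonneg fun j _ => sq_nonneg _
  have key : ∑ j, a j ^ ((12:ℝ)/5) ≤ S2 ^ ((6:ℝ)/5) := by
    have hterm : ∀ j, a j ^ ((12:ℝ)/5) ≤ a j ^ 2 * S2 ^ ((1:ℝ)/5) := by
      intro j
      have h1 : a j ^ ((12:ℝ)/5) = a j ^ 2 * (a j ^ 2) ^ ((1:ℝ)/5) := by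
        rw [← Real.rpow_natCast (a j) 2, ← Real.rpow_mul (ha j),
          ← Real.rpow_add' (ha j) (by norm_num)]
        norm_num
      rw [h1]
      refine mul_le_mul_of_nonneg_left ?_ (sq_nonneg _)
      exact Real.rpow_le_rpow (sq_nonneg _)
        (Finset.single_le_sum (fun j _ => sq_nonneg (a j)) (Finset.mem_univ j)) (by norm_num)
    calc ∑ j, a j ^ ((12:ℝ)/5) ≤ ∑ j, a j ^ 2 * S2 ^ ((1:ℝ)/5) :=
          Finset.sum_le_sum fun j _ => hterm j
      _ = S2 * S2 ^ ((1:ℝ)/5) := by rw [← Finset.sum_mul]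
      _ = S2 ^ ((6:ℝ)/5) := by
          nth_rewrite 1 [← Real.rpow_one S2]
          rw [← Real.rpow_add' hS20 (by norm_num)]
          norm_num
  calc (∑ j, a j ^ ((12:ℝ)/5)) ^ ((5:ℝ)/3)
      ≤ (S2 ^ ((6:ℝ)/5)) ^ ((5:ℝ)/3) :=
        Real.rpow_le_rpow (Finset.sum_nonneg fun j _ => Real.rpow_nonneg (ha j) _) key
          (by norm_num)
    _ = S2 ^ 2 := by
        rw [← Real.rpow_mul hS20, ← Real.rpow_natCast S2 2]
        norm_num

end Aux

/-- **Example: mixed exponents `(s_1, s_2) = (4, 12/5)` for trilinear forms on `ℓ_4^n`**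
(block partition `I_1 = {1,2}`, `I_2 = {3}`, `p = 4`, `m = 3`).  There is `D ≥ 1`
such that for every `n` and every trilinear form `A : ℓ_4^n × ℓ_4^n × ℓ_4^n → 𝕂`,
`(∑_i (∑_j |A(e_i, e_i, e_j)|^{12/5})^{5/3})^{1/4} ≤ D ‖A‖`. -/

theorem stmt11 {𝕂 : Type*} [RCLike 𝕂] :
    ∃ D : ℝ, 1 ≤ D ∧ ∀ (n : ℕ)
      (A : ContinuousMultilinearMap 𝕂 (fun _ : Fin 3 => PiLp 4 (fun _ : Fin n => 𝕂)) 𝕂),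
      (∑ i : Fin n, (∑ j : Fin n,
          ‖A ![e4 n i, e4 n i, e4 n j]‖ ^ ((12 : ℝ) / 5)) ^ ((5 : ℝ) / 3)) ^ ((1 : ℝ) / 4)
        ≤ D * ‖A‖ := by
  refine ⟨2, by norm_num, fun n A => ?_⟩
  have hM0 : (0:ℝ) ≤ ‖A‖ := norm_nonneg A
  have h1 : ∑ i : Fin n, (∑ j : Fin n,
        ‖A ![e4 n i, e4 n i, e4 n j]‖ ^ ((12 : ℝ) / 5)) ^ ((5 : ℝ) / 3)
      ≤ ∑ i : Fin n, (∑ j : Fin n, ‖A ![e4 n i, e4 n i, e4 n j]‖ ^ 2) ^ 2 :=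
    Finset.sum_le_sum fun i _ => row_mono _ (fun j => norm_nonneg _)
  have h2 := Yineq A
  have h3 : (3:ℝ) ^ ((1:ℝ)/2) ≤ 16 := by
    calc (3:ℝ) ^ ((1:ℝ)/2) ≤ 3 ^ (1:ℝ) :=
          Real.rpow_le_rpow_of_exponent_le (by norm_num) (by norm_num)
      _ ≤ 16 := by rw [Real.rpow_one]; norm_num
  have h4 : ∑ i : Fin n, (∑ j : Fin n,
        ‖A ![e4 n i, e4 n i, e4 n j]‖ ^ ((12 : ℝ) / 5)) ^ ((5 : ℝ) / 3)
      ≤ (2 * ‖A‖) ^ 4 := by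
    calc ∑ i : Fin n, (∑ j : Fin n,
          ‖A ![e4 n i, e4 n i, e4 n j]‖ ^ ((12 : ℝ) / 5)) ^ ((5 : ℝ) / 3)
        ≤ ∑ i : Fin n, (∑ j : Fin n, ‖A ![e4 n i, e4 n i, e4 n j]‖ ^ 2) ^ 2 := h1
      _ ≤ 3 ^ ((1:ℝ)/2) * ‖A‖ ^ 4 := h2
      _ ≤ 16 * ‖A‖ ^ 4 := mul_le_mul_of_nonneg_right h3 (by positivity)
      _ = (2 * ‖A‖) ^ 4 := by ring
  have hnn : (0:ℝ) ≤ ∑ i : Fin n, (∑ j : Fin n,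
      ‖A ![e4 n i, e4 n i, e4 n j]‖ ^ ((12 : ℝ) / 5)) ^ ((5 : ℝ) / 3) :=
    Finset.sum_nonneg fun i _ => Real.rpow_nonneg
      (Finset.sum_nonneg fun j _ => Real.rpow_nonneg (norm_nonneg _) _) _
  calc (∑ i : Fin n, (∑ j : Fin n,
        ‖A ![e4 n i, e4 n i, e4 n j]‖ ^ ((12 : ℝ) / 5)) ^ ((5 : ℝ) / 3)) ^ ((1 : ℝ) / 4)
      ≤ ((2 * ‖A‖) ^ 4) ^ ((1:ℝ)/4) := Real.rpow_le_rpow hnn h4 (by norm_num)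
    _ = 2 * ‖A‖ := by
        rw [← Real.rpow_natCast (2 * ‖A‖) 4, ← Real.rpow_mul (by positivity)]
        norm_num
end
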